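/- arXiv:1909.02535 — 7 statements merged into one kernel-verified Lean document; each statement's English description precedes it below -/
import Mathlib

section
/- For every θ ∈ ℝ and t < 0 the torus curve satisfies: (i) |∂_θγ(θ,t)|² = ∑_{j=1}^m k_j² r(t)^{2k_j²} (in particular ∂_θγ(θ,t) ≠ 0); (ii) ⟨∂_θ²γ(θ,t), ∂_θγ(θ,t)⟩ = 0; and (iii) ∂_tγ(θ,t) = ∂_θ²γ(θ,t) / |∂_θγ(θ,t)|². Hence γ is an ancient solution of the curve shortening flow: its normal velocity at every point equals the curvature vector of the curve θ ↦ γ(θ,t). -/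
/-!
Each pair of coordinates of `γ(·, t)` runs `k_j` times around a circle of radius `r(t)^(k_j²)`,
so `∂_θ²γ = -(k_j² r^(k_j²) (cos k_jθ, sin k_jθ))_j` is orthogonal to `∂_θγ`, and
`|∂_θγ|² = S := ∑ k_j² r^(2k_j²)`. The radius is the inverse of the strictly decreasing map
`ρ ↦ -(∑ ρ^(2k_j²))/2`, hence continuous, and the inverse function theorem gives `r' = -r/S`.
Thus `∂_t r^(k_j²) = -k_j² r^(k_j²)/S`, which says exactly `∂_tγ = ∂_θ²γ / S`.
-/

open Real Set Filter Topology

theorem StrictAntiOn.continuousAt_of_rightInvOn {α β : Type*} [LinearOrder α]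
    [TopologicalSpace α] [OrderTopology α] [DenselyOrdered α] [LinearOrder β]
    [TopologicalSpace β] [OrderTopology β] {F : α → β} {g : β → α} {s : Set α} {t : Set β}
    {b : β} (hF : StrictAntiOn F s) (hFs : MapsTo F s t) (hg : MapsTo g t s)
    (hFg : RightInvOn g F t) (ht : t ∈ 𝓝 b) (hs : s ∈ 𝓝 (g b)) : ContinuousAt g b := by
  have hg_anti : StrictMonoOn (OrderDual.toDual ∘ g) t := fun y₁ h₁ y₂ h₂ hy =>
    (hF.lt_iff_gt (hg h₁) (hg h₂)).1 (by rwa [hFg h₁, hFg h₂])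
  have hsurj : s ⊆ g '' t := fun ρ hρ =>
    ⟨F ρ, hFs hρ, hF.injOn (hg (hFs hρ)) hρ (hFg (hFs hρ))⟩
  exact hg_anti.continuousAt_of_image_mem_nhds ht (mem_of_superset hs hsurj)

theorem hasDerivAt_of_sum_pow_eq {ι : Type*} [Fintype ι] [Nonempty ι] {n : ι → ℕ}
    (hn : ∀ j, n j ≠ 0) {r : ℝ → ℝ} (hr : ∀ t < 0, 0 < r t ∧ ∑ j, r t ^ n j = -2 * t)
    {t : ℝ} (ht : t < 0) :
    HasDerivAt r (-2 / (∑ j, (n j : ℝ) * r t ^ n j) * r t) t := by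
  set F : ℝ → ℝ := fun ρ => -(∑ j, ρ ^ n j) / 2
  have hF : StrictAntiOn F (Ioi 0) := fun a ha b _ hab => by
    have : ∑ j, a ^ n j < ∑ j, b ^ n j :=
      Finset.sum_lt_sum_of_nonempty Finset.univ_nonempty fun j _ =>
        pow_lt_pow_left₀ hab (le_of_lt ha) (hn j)
    simp only [F]
    linarith
  have hFs : MapsTo F (Ioi 0) (Iio 0) := fun ρ hρ => by
    have : 0 < ∑ j, ρ ^ n j :=
      Finset.sum_pos (fun j _ => pow_pos (mem_Ioi.1 hρ) _) Finset.univ_nonempty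
    simp only [F, mem_Iio]
    linarith
  have hFr : RightInvOn r F (Iio 0) := fun y hy => by
    simp only [F, (hr y hy).2]
    ring
  obtain ⟨hρ, -⟩ := hr t ht
  have hcont : ContinuousAt r t :=
    hF.continuousAt_of_rightInvOn hFs (fun y hy => (hr y hy).1) hFr (Iio_mem_nhds ht)
      (Ioi_mem_nhds hρ)
  have hD : 0 < ∑ j, (n j : ℝ) * r t ^ (n j - 1) :=
    Finset.sum_pos (fun j _ => by have := hn j; positivity) Finset.univ_nonempty
  have hFderiv : HasDerivAt F (-(∑ j, (n j : ℝ) * r t ^ (n j - 1)) / 2) (r t) :=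
    (HasDerivAt.fun_sum fun j _ => hasDerivAt_pow (n j) (r t)).neg.div_const 2
  have hsum : ∑ j, (n j : ℝ) * r t ^ n j = r t * ∑ j, (n j : ℝ) * r t ^ (n j - 1) := by
    rw [Finset.mul_sum]
    exact Finset.sum_congr rfl fun j _ => by rw [← mul_pow_sub_one (hn j), mul_left_comm]
  refine (hFderiv.of_local_left_inverse hcont (by linarith)
    (eventually_of_mem (Iio_mem_nhds ht) hFr)).congr_deriv ?_
  rw [hsum]
  field_simp

theorem hasDerivAt_torusRadius {ι : Type*} [Fintype ι] [Nonempty ι] {k : ι → ℕ}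
    (hk : ∀ j, 0 < k j) {r : ℝ → ℝ}
    (hr : ∀ t < 0, 0 < r t ∧ ∑ j, r t ^ (2 * k j ^ 2) = -2 * t) {t : ℝ} (ht : t < 0) :
    HasDerivAt r (-(∑ j, (k j : ℝ) ^ 2 * r t ^ (2 * k j ^ 2))⁻¹ * r t) t := by
  refine (hasDerivAt_of_sum_pow_eq (fun j => by have := hk j; positivity) hr ht).congr_deriv ?_
  have hS : 0 < ∑ j, (k j : ℝ) ^ 2 * r t ^ (2 * k j ^ 2) :=
    Finset.sum_pos (fun j _ => by have := hk j; have := (hr t ht).1; positivity)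
      Finset.univ_nonempty
  simp only [Nat.cast_mul, Nat.cast_pow, Nat.cast_ofNat, mul_assoc, ← Finset.mul_sum]
  field_simp

theorem HasDerivAt.pow_of_eq_mul {𝕜 : Type*} [NontriviallyNormedField 𝕜] {f : 𝕜 → 𝕜}
    {c x : 𝕜} (hf : HasDerivAt f (c * f x) x) (n : ℕ) :
    HasDerivAt (fun y => f y ^ n) (n * c * f x ^ n) x := by
  refine (hf.fun_pow n).congr_deriv ?_
  rcases n with _ | n
  · simp
  · simp only [Nat.add_sub_cancel, pow_succ]
    push_cast
    ring

theorem hasDerivAt_toLp_of_forall {𝕜 ι : Type*} [NontriviallyNormedField 𝕜] [Fintype ι]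
    {E : ι → Type*} [∀ i, NormedAddCommGroup (E i)] [∀ i, NormedSpace 𝕜 (E i)]
    (p : ENNReal) [Fact (1 ≤ p)] {φ : 𝕜 → ∀ i, E i} {φ' : ∀ i, E i} {x : 𝕜}
    (h : ∀ i, HasDerivAt (fun y => φ y i) (φ' i) x) :
    HasDerivAt (fun y => WithLp.toLp p (φ y)) (WithLp.toLp p φ') x :=
  (PiLp.hasFDerivAt_toLp p (φ x)).comp_hasDerivAt x (hasDerivAt_pi.2 h)

section TorusCurve

variable {ι : Type*}

noncomputable def torusPoint (a k : ι → ℝ) (θ : ℝ) : EuclideanSpace ℝ (ι × Fin 2) :=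
  WithLp.toLp 2 fun p => a p.1 * ![cos (k p.1 * θ), sin (k p.1 * θ)] p.2

noncomputable def torusTangent (a k : ι → ℝ) (θ : ℝ) : EuclideanSpace ℝ (ι × Fin 2) :=
  WithLp.toLp 2 fun p => a p.1 * ![-sin (k p.1 * θ), cos (k p.1 * θ)] p.2

variable (a k : ι → ℝ) (θ : ℝ)

theorem torusPoint_smul (c : ℝ) : torusPoint (c • a) k θ = c • torusPoint a k θ := by
  ext ⟨j, i⟩
  simp [torusPoint, mul_assoc]

variable [Fintype ι]

theorem hasDerivAt_torusPoint :
    HasDerivAt (torusPoint a k) (torusTangent (a * k) k θ) θ := by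
  refine hasDerivAt_toLp_of_forall 2 fun ⟨j, i⟩ => ?_
  have hlin : HasDerivAt (fun θ => k j * θ) (k j) θ := by
    simpa using (hasDerivAt_id θ).const_mul (k j)
  fin_cases i
  · simpa [mul_comm, mul_assoc, mul_left_comm] using hlin.cos.const_mul (a j)
  · simpa [mul_comm, mul_assoc, mul_left_comm] using hlin.sin.const_mul (a j)

theorem hasDerivAt_torusTangent :
    HasDerivAt (torusTangent a k) (-torusPoint (a * k) k θ) θ := by
  refine hasDerivAt_toLp_of_forall 2 fun ⟨j, i⟩ => ?_
  have hlin : HasDerivAt (fun θ => k j * θ) (k j) θ := by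
    simpa using (hasDerivAt_id θ).const_mul (k j)
  fin_cases i
  · simpa [torusPoint, mul_comm, mul_assoc, mul_left_comm] using hlin.sin.neg.const_mul (a j)
  · simpa [torusPoint, mul_comm, mul_assoc, mul_left_comm] using hlin.cos.const_mul (a j)

theorem deriv_torusPoint : deriv (torusPoint a k) = torusTangent (a * k) k :=
  funext fun θ => (hasDerivAt_torusPoint a k θ).deriv

theorem deriv_torusTangent : deriv (torusTangent a k) θ = -torusPoint (a * k) k θ :=
  (hasDerivAt_torusTangent a k θ).deriv

theorem norm_torusTangent_sq : ‖torusTangent a k θ‖ ^ 2 = ∑ j, a j ^ 2 := by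
  rw [← real_inner_self_eq_norm_sq, PiLp.inner_apply, Fintype.sum_prod_type]
  refine Finset.sum_congr rfl fun j _ => ?_
  simp only [torusTangent, Fin.sum_univ_two, RCLike.inner_apply, conj_trivial, PiLp.toLp_apply,
    Matrix.cons_val_zero, Matrix.cons_val_one]
  linear_combination a j ^ 2 * sin_sq_add_cos_sq (k j * θ)

theorem inner_torusPoint_torusTangent (b : ι → ℝ) :
    inner ℝ (torusPoint a k θ) (torusTangent b k θ) = 0 := by
  rw [PiLp.inner_apply, Fintype.sum_prod_type]
  refine Finset.sum_eq_zero fun j _ => ?_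
  simp only [torusPoint, torusTangent, Fin.sum_univ_two, RCLike.inner_apply, conj_trivial,
    PiLp.toLp_apply, Matrix.cons_val_zero, Matrix.cons_val_one]
  ring

theorem hasDerivAt_torusPoint_of_amplitude {b : ℝ → ι → ℝ} {b' : ι → ℝ} {t : ℝ}
    (hb : ∀ j, HasDerivAt (fun s => b s j) (b' j) t) :
    HasDerivAt (fun s => torusPoint (b s) k θ) (torusPoint b' k θ) t :=
  hasDerivAt_toLp_of_forall 2 fun p => (hb p.1).mul_const _

end TorusCurve


theorem torus_curve_is_curve_shortening_flow_general (m : ℕ) (hm : 1 ≤ m) (k : Fin m → ℕ)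
    (hkpos : ∀ j, 0 < k j)
    (r : ℝ → ℝ)
    (hr : ∀ t < (0:ℝ), 0 < r t ∧ ∑ j : Fin m, (r t) ^ (2 * (k j) ^ 2) = -2 * t)
    (γ : ℝ → ℝ → EuclideanSpace ℝ (Fin m × Fin 2))
    (hγ : ∀ (θ t : ℝ) (j : Fin m),
      γ θ t (j, 0) = (r t) ^ ((k j) ^ 2) * Real.cos (k j * θ) ∧
      γ θ t (j, 1) = (r t) ^ ((k j) ^ 2) * Real.sin (k j * θ))
    (θ t : ℝ) (ht : t < 0) :
    (‖deriv (fun θ' => γ θ' t) θ‖ ^ 2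
        = ∑ j : Fin m, (k j : ℝ) ^ 2 * (r t) ^ (2 * (k j) ^ 2)
      ∧ deriv (fun θ' => γ θ' t) θ ≠ 0)
    ∧ inner ℝ (deriv (fun θ' => deriv (fun θ'' => γ θ'' t) θ') θ)
        (deriv (fun θ' => γ θ' t) θ) = (0 : ℝ)
    ∧ deriv (fun s => γ θ s) t
        = (‖deriv (fun θ' => γ θ' t) θ‖ ^ 2)⁻¹ •
            deriv (fun θ' => deriv (fun θ'' => γ θ'' t) θ') θ := by
  have : Nonempty (Fin m) := ⟨⟨0, hm⟩⟩
  obtain rfl : γ = fun θ t => torusPoint (fun j => r t ^ k j ^ 2) (fun j => (k j : ℝ)) θ := by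
    funext θ t
    ext ⟨j, i⟩
    fin_cases i <;> simp [torusPoint, hγ]
  beta_reduce
  set κ : Fin m → ℝ := fun j => k j
  set a : Fin m → ℝ := fun j => r t ^ k j ^ 2
  set S := ∑ j, (k j : ℝ) ^ 2 * r t ^ (2 * k j ^ 2)
  have hS : 0 < S := Finset.sum_pos (fun j _ => by
    have := hkpos j; have := (hr t ht).1; positivity) Finset.univ_nonempty
  have hnorm : ‖torusTangent (a * κ) κ θ‖ ^ 2 = S := by
    rw [norm_torusTangent_sq]
    exact Finset.sum_congr rfl fun j _ => by simp only [Pi.mul_apply, a, κ]; ring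
  have htime : HasDerivAt (fun s => torusPoint (fun j => r s ^ k j ^ 2) κ θ)
      (S⁻¹ • -torusPoint (a * κ * κ) κ θ) t := by
    rw [smul_neg, ← neg_smul, ← torusPoint_smul]
    refine hasDerivAt_torusPoint_of_amplitude κ θ fun j =>
      ((hasDerivAt_torusRadius hkpos hr ht).pow_of_eq_mul (k j ^ 2)).congr_deriv ?_
    simp only [Pi.smul_apply, Pi.mul_apply, smul_eq_mul, Nat.cast_pow, a, κ, S]
    ring
  simp only [deriv_torusPoint, deriv_torusTangent, htime.deriv, hnorm]
  exact ⟨⟨trivial, fun h => by simp [h] at hnorm; linarith⟩,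
    by rw [inner_neg_left, inner_torusPoint_torusTangent, neg_zero], trivial⟩

/-- The torus curve `γ : ℝ × (-∞,0) → ℝ^{2m}` (here `ℝ^{2m}` is modeled as the
Euclidean space on `Fin m × Fin 2`, the `j`-th pair of coordinates being
`r(t)^(k_j²) (cos (k_j θ), sin (k_j θ))`) satisfies, for every `θ` and `t < 0`:
(i) `|∂_θ γ|² = ∑_j k_j² r(t)^(2 k_j²)` (in particular `∂_θ γ ≠ 0`);
(ii) `⟨∂_θ² γ, ∂_θ γ⟩ = 0`;
(iii) `∂_t γ = ∂_θ² γ / |∂_θ γ|²`.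
Hence `γ` is an ancient solution of the curve shortening flow. -/
theorem torus_curve_is_curve_shortening_flow (m : ℕ) (hm : 1 ≤ m) (k : Fin m → ℕ)
    (hkpos : ∀ j, 0 < k j) (hkmono : StrictMono k)
    (r : ℝ → ℝ)
    (hr : ∀ t < (0:ℝ), 0 < r t ∧ ∑ j : Fin m, (r t) ^ (2 * (k j) ^ 2) = -2 * t)
    (γ : ℝ → ℝ → EuclideanSpace ℝ (Fin m × Fin 2))
    (hγ : ∀ (θ t : ℝ) (j : Fin m),
      γ θ t (j, 0) = (r t) ^ ((k j) ^ 2) * Real.cos (k j * θ) ∧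
      γ θ t (j, 1) = (r t) ^ ((k j) ^ 2) * Real.sin (k j * θ))
    (θ t : ℝ) (ht : t < 0) :
    (‖deriv (fun θ' => γ θ' t) θ‖ ^ 2
        = ∑ j : Fin m, (k j : ℝ) ^ 2 * (r t) ^ (2 * (k j) ^ 2)
      ∧ deriv (fun θ' => γ θ' t) θ ≠ 0)
    ∧ inner ℝ (deriv (fun θ' => deriv (fun θ'' => γ θ'' t) θ') θ)
        (deriv (fun θ' => γ θ' t) θ) = (0 : ℝ)
    ∧ deriv (fun s => γ θ s) t
        = (‖deriv (fun θ' => γ θ' t) θ‖ ^ 2)⁻¹ •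
            deriv (fun θ' => deriv (fun θ'' => γ θ'' t) θ') θ :=
  torus_curve_is_curve_shortening_flow_general m hm k hkpos r hr γ hγ θ t ht
end

section
/- Suppose ρ : (−∞,0) → (0,∞) is differentiable with ρ(t) → +∞ as t → −∞ and ρ(t) → 0 as t → 0⁻, and suppose the family γ^ρ(θ,t), defined by γ^ρ(θ,t)_{2j−1} = ρ(t)^{k_j²}cos(k_jθ) and γ^ρ(θ,t)_{2j} = ρ(t)^{k_j²}sin(k_jθ), satisfies ∂_tγ^ρ(θ,t) = ∂_θ²γ^ρ(θ,t)/|∂_θγ^ρ(θ,t)|² for all θ ∈ ℝ and t < 0. Then ∑_{j=1}^m ρ(t)^{2k_j²} = −2t for every t < 0; i.e., ρ coincides with the scale function r of the torus curve. -/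
/-!
At `θ = 0` the first coordinate of the flow equation reads
`(ρ ^ k²)' = -k² ρ ^ k² / L` with `L = ∑ⱼ kⱼ² ρ ^ (2 kⱼ²) = ‖∂_θ γ‖²`, i.e. `ρ' L = -ρ`.
This is exactly what makes `∑ⱼ ρ ^ (2 kⱼ²)` have derivative `-2`, and the boundary
condition `ρ → 0` at `0⁻` fixes the constant of integration.
-/

open Real Filter Topology

theorem PiLp.deriv_apply {𝕜 ι : Type*} [NontriviallyNormedField 𝕜] [Fintype ι] {E : ι → Type*}
    [∀ i, NormedAddCommGroup (E i)] [∀ i, NormedSpace 𝕜 (E i)] {p : ENNReal} [Fact (1 ≤ p)]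
    {f : 𝕜 → PiLp p E} {x : 𝕜} (hf : DifferentiableAt 𝕜 f x) (i : ι) :
    deriv f x i = deriv (fun t => f t i) x :=
  ((PiLp.hasFDerivAt_apply p (f x) i).comp_hasDerivAt x hf.hasDerivAt).deriv.symm

/-- The phase `φ` makes this class closed under differentiation, which shifts it by `π / 2`. -/
def IsTorusCurve {ι : Type*} (a c φ : ι → ℝ) (γ : ℝ → EuclideanSpace ℝ (ι × Fin 2)) : Prop :=
  ∀ θ j, γ θ (j, 0) = a j * cos (c j * θ + φ j) ∧ γ θ (j, 1) = a j * sin (c j * θ + φ j)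

namespace IsTorusCurve

variable {ι : Type*} {a c φ : ι → ℝ} {γ : ℝ → EuclideanSpace ℝ (ι × Fin 2)}

theorem norm_sq_eq [Fintype ι] (hγ : IsTorusCurve a c φ γ) (θ : ℝ) :
    ‖γ θ‖ ^ 2 = ∑ j, a j ^ 2 := by
  simp only [EuclideanSpace.real_norm_sq_eq, Fintype.sum_prod_type, Fin.sum_univ_two,
    (hγ θ _).1, (hγ θ _).2]
  congr! 1 with j
  linear_combination a j ^ 2 * sin_sq_add_cos_sq (c j * θ + φ j)

theorem hasDerivAt_apply_zero (hγ : IsTorusCurve a c φ γ) (θ : ℝ) (j : ι) :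
    HasDerivAt (fun θ => γ θ (j, 0)) (a j * c j * cos (c j * θ + (φ j + π / 2))) θ := by
  rw [show (fun θ => γ θ (j, 0)) = _ from funext fun θ => (hγ θ j).1, ← add_assoc,
    cos_add_pi_div_two]
  exact ((((hasDerivAt_id' θ).const_mul (c j)).add_const (φ j)).cos.const_mul (a j)).congr_deriv
    (by ring)

theorem hasDerivAt_apply_one (hγ : IsTorusCurve a c φ γ) (θ : ℝ) (j : ι) :
    HasDerivAt (fun θ => γ θ (j, 1)) (a j * c j * sin (c j * θ + (φ j + π / 2))) θ := by
  rw [show (fun θ => γ θ (j, 1)) = _ from funext fun θ => (hγ θ j).2, ← add_assoc,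
    sin_add_pi_div_two]
  exact ((((hasDerivAt_id' θ).const_mul (c j)).add_const (φ j)).sin.const_mul (a j)).congr_deriv
    (by ring)

theorem deriv [Fintype ι] (hγ : IsTorusCurve a c φ γ) :
    IsTorusCurve (a * c) c (fun j => φ j + π / 2) (deriv γ) := by
  have hdiff : ∀ θ, DifferentiableAt ℝ γ θ := fun θ =>
    (differentiableAt_piLp 2).2 fun ⟨j, i⟩ => by
      fin_cases i
      exacts [(hγ.hasDerivAt_apply_zero θ j).differentiableAt,
        (hγ.hasDerivAt_apply_one θ j).differentiableAt]
  intro θ j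
  rw [PiLp.deriv_apply (hdiff θ), PiLp.deriv_apply (hdiff θ)]
  exact ⟨(hγ.hasDerivAt_apply_zero θ j).deriv, (hγ.hasDerivAt_apply_one θ j).deriv⟩

end IsTorusCurve

theorem hasDerivAt_sum_pow_of_deriv_mul_eq {ι : Type*} [Fintype ι] {n : ι → ℕ} {ρ : ℝ → ℝ}
    {ρ' c t : ℝ} (hρ : HasDerivAt ρ ρ' t) (hρt : ρ t ≠ 0)
    (hode : ρ' * ∑ j, (n j : ℝ) * ρ t ^ n j = -c * ρ t) :
    HasDerivAt (fun s => ∑ j, ρ s ^ n j) (-c) t := by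
  refine (HasDerivAt.fun_sum (u := Finset.univ) fun j _ => hρ.pow (n j)).congr_deriv ?_
  refine mul_right_cancel₀ hρt ?_
  rw [← hode, Finset.sum_mul, Finset.mul_sum]
  congr! 1 with j
  rcases eq_or_ne (n j) 0 with hj | hj
  · simp [hj]
  · rw [← pow_sub_one_mul hj]; ring

theorem eq_sub_mul_of_hasDerivAt_of_tendsto {f : ℝ → ℝ} {c b L : ℝ}
    (hf : ∀ t < b, HasDerivAt f c t) (hlim : Tendsto f (𝓝[<] b) (𝓝 L)) :
    ∀ t < b, f t = L - c * (b - t) := by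
  intro t ht
  have hg : ∀ s < b, HasDerivAt (fun s => f s - c * s) 0 s := fun s hs => by
    simpa using (hf s hs).fun_sub ((hasDerivAt_id' s).const_mul c)
  have hconst : ∀ s < b, f s - c * s = f t - c * t := fun s hs =>
    isOpen_Iio.is_const_of_deriv_eq_zero (f := fun s => f s - c * s) isPreconnected_Iio
      (fun x hx => (hg x hx).differentiableAt.differentiableWithinAt)
      (fun x hx => (hg x hx).deriv) hs ht
  have hlim' : Tendsto f (𝓝[<] b) (𝓝 (f t - c * t + c * b)) :=
    ((Continuous.tendsto (f := fun s => f t - c * t + c * s) (by fun_prop) b).mono_left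
      nhdsWithin_le_nhds).congr'
        (eventually_nhdsWithin_of_forall fun s hs => by linarith [hconst s hs])
  linarith [tendsto_nhds_unique hlim hlim']

section TorusFamily

variable {ι : Type*} [Fintype ι] {k : ι → ℕ} {ρ : ℝ → ℝ}
  {γ : ℝ → ℝ → EuclideanSpace ℝ (ι × Fin 2)} {t : ℝ}

theorem deriv_time_apply_eq_deriv_pow
    (hγ : ∀ (θ t : ℝ) (j : ι),
      γ θ t (j, 0) = ρ t ^ k j ^ 2 * cos (k j * θ) ∧ γ θ t (j, 1) = ρ t ^ k j ^ 2 * sin (k j * θ))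
    (hρ : DifferentiableAt ℝ ρ t) (j : ι) :
    deriv (fun s => γ 0 s) t (j, 0) = deriv (fun s => ρ s ^ k j ^ 2) t := by
  have hcos : ∀ j, (fun s => γ 0 s (j, 0)) = fun s => ρ s ^ k j ^ 2 := fun j =>
    funext fun s => by simp [(hγ 0 s j).1]
  have hsin : ∀ j, (fun s => γ 0 s (j, 1)) = fun _ => 0 := fun j =>
    funext fun s => by simp [(hγ 0 s j).2]
  have hdiff : DifferentiableAt ℝ (fun s => γ 0 s) t :=
    (differentiableAt_piLp 2).2 fun ⟨j, i⟩ => by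
      fin_cases i
      · exact hcos j ▸ hρ.fun_pow _
      · exact hsin j ▸ differentiableAt_const _
  rw [PiLp.deriv_apply hdiff, hcos]

theorem deriv_mul_sum_eq_neg_of_flow
    (hγ : ∀ (θ t : ℝ) (j : ι),
      γ θ t (j, 0) = ρ t ^ k j ^ 2 * cos (k j * θ) ∧ γ θ t (j, 1) = ρ t ^ k j ^ 2 * sin (k j * θ))
    (hρt : 0 < ρ t) (hρ : DifferentiableAt ℝ ρ t) {j₀ : ι} (hj₀ : 0 < k j₀)
    (hflow : deriv (fun s => γ 0 s) t
        = (‖deriv (fun θ => γ θ t) 0‖ ^ 2)⁻¹ • deriv (deriv fun θ => γ θ t) 0) :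
    deriv ρ t * ∑ j, (k j : ℝ) ^ 2 * ρ t ^ (2 * k j ^ 2) = -ρ t := by
  set L := ∑ j, (k j : ℝ) ^ 2 * ρ t ^ (2 * k j ^ 2)
  have htorus : IsTorusCurve (fun j => ρ t ^ k j ^ 2) (fun j => (k j : ℝ)) 0 fun θ => γ θ t :=
    fun θ j => by simpa using hγ θ t j
  have hvel := htorus.deriv
  have hnorm : ‖deriv (fun θ => γ θ t) 0‖ ^ 2 = L := by
    rw [hvel.norm_sq_eq]
    congr! 1 with j
    simp only [Pi.mul_apply]; ring
  have hacc : deriv (deriv fun θ => γ θ t) 0 (j₀, 0) = -((k j₀ : ℝ) ^ 2 * ρ t ^ k j₀ ^ 2) := by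
    rw [(hvel.deriv 0 j₀).1]
    simp only [Pi.mul_apply, mul_zero, zero_add, Pi.zero_apply, add_halves, cos_pi]
    ring
  have hL : 0 < L := by
    refine lt_of_lt_of_le ?_ (Finset.single_le_sum
      (f := fun j => (k j : ℝ) ^ 2 * ρ t ^ (2 * k j ^ 2)) (fun j _ => by positivity)
      (Finset.mem_univ j₀))
    positivity
  have h := congrArg (· (j₀, 0)) hflow
  simp only [PiLp.smul_apply, smul_eq_mul] at h
  rw [deriv_time_apply_eq_deriv_pow hγ hρ, hnorm, hacc, (hρ.hasDerivAt.fun_pow _).deriv,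
    ← pow_sub_one_mul (pow_ne_zero 2 hj₀.ne')] at h
  push_cast at h
  -- `field_simp` clears `L⁻¹` using `hL` and cancels the common factor `k² ρ ^ (k² - 1)`.
  field_simp at h
  exact h

end TorusFamily

theorem torus_scale_unique_general (m : ℕ) (hm : 1 ≤ m) (k : Fin m → ℕ)
    (hkpos : ∀ j, 0 < k j)
    (ρ : ℝ → ℝ)
    (hρpos : ∀ t < (0:ℝ), 0 < ρ t)
    (hρdiff : ∀ t < (0:ℝ), DifferentiableAt ℝ ρ t)
    (hρzero : Filter.Tendsto ρ (nhdsWithin 0 (Set.Iio 0)) (nhds 0))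
    (γ : ℝ → ℝ → EuclideanSpace ℝ (Fin m × Fin 2))
    (hγ : ∀ (θ t : ℝ) (j : Fin m),
      γ θ t (j, 0) = (ρ t) ^ ((k j) ^ 2) * Real.cos (k j * θ) ∧
      γ θ t (j, 1) = (ρ t) ^ ((k j) ^ 2) * Real.sin (k j * θ))
    (hflow : ∀ (θ : ℝ), ∀ t < (0:ℝ),
      deriv (fun s => γ θ s) t
        = (‖deriv (fun θ' => γ θ' t) θ‖ ^ 2)⁻¹ •
            deriv (fun θ' => deriv (fun θ'' => γ θ'' t) θ') θ) :
    ∀ t < (0:ℝ), ∑ j : Fin m, (ρ t) ^ (2 * (k j) ^ 2) = -2 * t := by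
  have hderiv : ∀ t < (0:ℝ), HasDerivAt (fun s => ∑ j, ρ s ^ (2 * k j ^ 2)) (-2) t := by
    intro t ht
    have hode := deriv_mul_sum_eq_neg_of_flow hγ (hρpos t ht) (hρdiff t ht) (hkpos ⟨0, hm⟩)
      (hflow 0 t ht)
    refine hasDerivAt_sum_pow_of_deriv_mul_eq (hρdiff t ht).hasDerivAt (hρpos t ht).ne' ?_
    simp only [Nat.cast_mul, Nat.cast_ofNat, Nat.cast_pow, mul_assoc, ← Finset.mul_sum]
    linear_combination 2 * hode
  have hlim : Tendsto (fun s => ∑ j, ρ s ^ (2 * k j ^ 2)) (𝓝[<] 0) (𝓝 0) := by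
    have hterm : ∀ j, Tendsto (fun s => ρ s ^ (2 * k j ^ 2)) (𝓝[<] 0) (𝓝 0) := fun j => by
      have h0 : (0 : ℝ) ^ (2 * k j ^ 2) = 0 := zero_pow (by have := hkpos j; positivity)
      have h := hρzero.pow (2 * k j ^ 2)
      rwa [h0] at h
    simpa using tendsto_finsetSum Finset.univ fun j _ => hterm j
  intro t ht
  linarith [eq_sub_mul_of_hasDerivAt_of_tendsto hderiv hlim t ht]

/-- Uniqueness of the scale function: if `ρ : (-∞,0) → (0,∞)` is differentiable with
`ρ(t) → +∞` as `t → -∞` and `ρ(t) → 0` as `t → 0⁻`, and the associated torus curve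
`γ^ρ` satisfies the curve shortening flow equation `∂_t γ^ρ = ∂_θ² γ^ρ / |∂_θ γ^ρ|²`,
then `∑_j ρ(t)^(2 k_j²) = -2 t` for every `t < 0`, i.e. `ρ` coincides with the scale
function `r` of the torus curve. -/
theorem torus_scale_unique (m : ℕ) (hm : 1 ≤ m) (k : Fin m → ℕ)
    (hkpos : ∀ j, 0 < k j) (hkmono : StrictMono k)
    (ρ : ℝ → ℝ)
    (hρpos : ∀ t < (0:ℝ), 0 < ρ t)
    (hρdiff : ∀ t < (0:ℝ), DifferentiableAt ℝ ρ t)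
    (hρbot : Filter.Tendsto ρ Filter.atBot Filter.atTop)
    (hρzero : Filter.Tendsto ρ (nhdsWithin 0 (Set.Iio 0)) (nhds 0))
    (γ : ℝ → ℝ → EuclideanSpace ℝ (Fin m × Fin 2))
    (hγ : ∀ (θ t : ℝ) (j : Fin m),
      γ θ t (j, 0) = (ρ t) ^ ((k j) ^ 2) * Real.cos (k j * θ) ∧
      γ θ t (j, 1) = (ρ t) ^ ((k j) ^ 2) * Real.sin (k j * θ))
    (hflow : ∀ (θ : ℝ), ∀ t < (0:ℝ),
      deriv (fun s => γ θ s) t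
        = (‖deriv (fun θ' => γ θ' t) θ‖ ^ 2)⁻¹ •
            deriv (fun θ' => deriv (fun θ'' => γ θ'' t) θ') θ) :
    ∀ t < (0:ℝ), ∑ j : Fin m, (ρ t) ^ (2 * (k j) ^ 2) = -2 * t :=
  torus_scale_unique_general m hm k hkpos ρ hρpos hρdiff hρzero γ hγ hflow
end

section
/- As t → −∞, the rescaled torus curves θ ↦ γ(θ,t)/√(−t) converge uniformly in θ ∈ ℝ to the map θ ↦ √2·(0, …, 0, cos(k_m θ), sin(k_m θ)) ∈ ℝ^{2m}, the multiplicity-k_m parametrization of the circle of radius √2 in the last two coordinates. In other words, the tangent flow of the torus curve at t = −∞ is the multiplicity k_m circle. -/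
/-!
Since `∑ j, r ^ (2 k_j²) = -2t`, the radius `r` tends to `∞` as `t → -∞`, and then the term with
the largest exponent `2 k_m²` dominates the sum. Hence the amplitudes `r ^ (k_j²) / √(-t)` tend
to `√2` for `j = m` and to `0` otherwise. The rescaled curve and the limit circle have the
same angles `k_j θ` in every coordinate plane, so their distance equals the Euclidean distance
of the amplitude vectors, which does not depend on `θ`: the convergence is uniform.
-/

open Filter Topology Asymptotics Real

lemma tendstoUniformly_of_dist_le {ι α β : Type*} [PseudoMetricSpace β] {l : Filter ι}
    {F : ι → α → β} {f : α → β} {e : ι → ℝ} (he : Tendsto e l (𝓝 0))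
    (hF : ∀ᶠ n in l, ∀ x, dist (F n x) (f x) ≤ e n) : TendstoUniformly F f l := by
  refine Metric.tendstoUniformly_iff.2 fun ε hε => ?_
  filter_upwards [hF, he.eventually (gt_mem_nhds hε)] with n hn hnε x
  exact dist_comm (f x) (F n x) ▸ (hn x).trans_lt hnε

lemma tendsto_atTop_of_tendsto_sum_pow_atTop {α ι : Type*} [Fintype ι] {l : Filter α}
    {f : α → ℝ} (n : ι → ℕ) (hf : ∀ᶠ x in l, 0 ≤ f x)
    (h : Tendsto (fun x => ∑ i, f x ^ n i) l atTop) : Tendsto f l atTop := by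
  refine tendsto_atTop.2 fun C => ?_
  filter_upwards [hf, h.eventually_gt_atTop (∑ i, C ^ n i)] with x hx₀ hx
  by_contra! hlt
  exact hx.not_ge (Finset.sum_le_sum fun i _ => pow_le_pow_left₀ hx₀ hlt.le _)

lemma tendsto_pow_div_sum_pow {α ι : Type*} [Fintype ι] [DecidableEq ι] {l : Filter α}
    {ρ : α → ℝ} {e : ι → ℕ} {i₀ : ι} (he : ∀ j ≠ i₀, e j < e i₀) (hρ : Tendsto ρ l atTop)
    (j : ι) : Tendsto (fun x => ρ x ^ e j / ∑ i, ρ x ^ e i) l (𝓝 (if j = i₀ then 1 else 0)) := by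
  have hρ₀ : ∀ᶠ x in l, 0 < ρ x := hρ.eventually_gt_atTop 0
  have hdom : ∀ᶠ x in l, ρ x ^ e i₀ ≤ ∑ i, ρ x ^ e i := by
    filter_upwards [hρ₀] with x hx
    exact Finset.single_le_sum (f := fun i => ρ x ^ e i) (fun i _ => by positivity)
      (Finset.mem_univ i₀)
  have hsmall : ∀ j ≠ i₀, Tendsto (fun x => ρ x ^ e j / ∑ i, ρ x ^ e i) l (𝓝 0) := by
    intro j hj
    have hratio := ((isLittleO_pow_pow_atTop_of_lt (he j hj)).comp_tendsto hρ).tendsto_div_nhds_zero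
    refine tendsto_of_tendsto_of_tendsto_of_le_of_le' tendsto_const_nhds hratio ?_ ?_
    · filter_upwards [hρ₀] with x hx
      positivity
    · filter_upwards [hρ₀, hdom] with x hx hxdom
      exact div_le_div_of_nonneg_left (pow_nonneg hx.le _) (pow_pos hx _) hxdom
  split_ifs with h
  · subst h
    -- the weights `ρ ^ e i / ∑ ρ ^ e` sum to one, and all but the `j`-th vanish in the limit
    have hrest := tendsto_finsetSum (Finset.univ.erase j) fun i hi =>
      hsmall i (Finset.ne_of_mem_erase hi)
    rw [Finset.sum_const_zero] at hrest
    refine ((tendsto_const_nhds (x := (1 : ℝ))).sub hrest).congr' ?_ |>.trans (by rw [sub_zero])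
    filter_upwards [hρ₀] with x hx
    have hsum : ∑ i, ρ x ^ e i / ∑ i, ρ x ^ e i = 1 := by
      rw [← Finset.sum_div, div_self (Finset.sum_pos (fun i _ => by positivity)
        ⟨j, Finset.mem_univ j⟩).ne']
    rw [← Finset.sum_erase_add _ _ (Finset.mem_univ j)] at hsum
    linarith
  · exact hsmall j h

lemma EuclideanSpace.dist_eq_of_polar {ι : Type*} [Fintype ι]
    {x y : EuclideanSpace ℝ (ι × Fin 2)} {a b φ : ι → ℝ}
    (hx : ∀ j, x (j, 0) = a j * cos (φ j) ∧ x (j, 1) = a j * sin (φ j))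
    (hy : ∀ j, y (j, 0) = b j * cos (φ j) ∧ y (j, 1) = b j * sin (φ j)) :
    dist x y = dist (WithLp.toLp 2 a : EuclideanSpace ℝ ι) (WithLp.toLp 2 b) := by
  rw [EuclideanSpace.dist_eq, EuclideanSpace.dist_eq, Fintype.sum_prod_type]
  congr 1
  refine Finset.sum_congr rfl fun j _ => ?_
  simp only [Fin.sum_univ_two, Real.dist_eq, sq_abs, (hx j).1, (hx j).2, (hy j).1, (hy j).2]
  linear_combination (a j - b j) ^ 2 * sin_sq_add_cos_sq (φ j)

section TorusCurve

variable {ι : Type*} [Fintype ι] {k : ι → ℕ} {r : ℝ → ℝ}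

lemma tendsto_radius_atBot
    (hr : ∀ t < (0:ℝ), 0 < r t ∧ ∑ j, (r t) ^ (2 * (k j) ^ 2) = -2 * t) :
    Tendsto r atBot atTop := by
  have hneg : ∀ᶠ t in atBot, t < (0:ℝ) := eventually_lt_atBot 0
  refine tendsto_atTop_of_tendsto_sum_pow_atTop (fun j => 2 * k j ^ 2)
    (hneg.mono fun t ht => (hr t ht).1.le) ?_
  refine (tendsto_id.const_mul_atBot_of_neg (by norm_num : (-2:ℝ) < 0)).congr' ?_
  filter_upwards [hneg] with t ht
  exact ((hr t ht).2).symm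

lemma tendsto_rescaled_amplitude [DecidableEq ι] {i₀ : ι} (hk : ∀ j ≠ i₀, k j < k i₀)
    (hr : ∀ t < (0:ℝ), 0 < r t ∧ ∑ j, (r t) ^ (2 * (k j) ^ 2) = -2 * t) (j : ι) :
    Tendsto (fun t => (√(-t))⁻¹ * r t ^ (k j ^ 2)) atBot (𝓝 (if j = i₀ then √2 else 0)) := by
  have hweight := tendsto_pow_div_sum_pow (e := fun j => 2 * k j ^ 2)
    (fun j hj => by gcongr; exact hk j hj) (tendsto_radius_atBot hr) j
  have hsqrt := (continuous_sqrt.tendsto _).comp (hweight.const_mul 2)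
  have hlim : √(2 * if j = i₀ then 1 else 0) = if j = i₀ then √2 else 0 := by
    split_ifs <;> simp
  rw [hlim] at hsqrt
  refine hsqrt.congr' ?_
  filter_upwards [eventually_lt_atBot 0] with t ht
  have hr_pos := (hr t ht).1
  simp only [Function.comp_apply, (hr t ht).2]
  rw [show 2 * (r t ^ (2 * k j ^ 2) / (-2 * t)) = (r t ^ k j ^ 2) ^ 2 / (-t) by
      rw [← pow_mul, mul_comm _ 2]; field_simp,
    sqrt_div' _ (by linarith), sqrt_sq (by positivity), div_eq_inv_mul]

end TorusCurve

theorem torus_curve_tangent_flow_at_minus_infty_general (m : ℕ) (k : Fin m → ℕ)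
    (hkmono : StrictMono k)
    (r : ℝ → ℝ)
    (hr : ∀ t < (0:ℝ), 0 < r t ∧ ∑ j : Fin m, (r t) ^ (2 * (k j) ^ 2) = -2 * t)
    (γ : ℝ → ℝ → EuclideanSpace ℝ (Fin m × Fin 2))
    (hγ : ∀ (θ t : ℝ) (j : Fin m),
      γ θ t (j, 0) = (r t) ^ ((k j) ^ 2) * Real.cos (k j * θ) ∧
      γ θ t (j, 1) = (r t) ^ ((k j) ^ 2) * Real.sin (k j * θ))
    (jmax : Fin m) (hjmax : (jmax : ℕ) = m - 1)
    (L : ℝ → EuclideanSpace ℝ (Fin m × Fin 2))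
    (hL : ∀ (θ : ℝ) (j : Fin m),
      (L θ (j, 0) = if j = jmax then Real.sqrt 2 * Real.cos (k jmax * θ) else 0) ∧
      (L θ (j, 1) = if j = jmax then Real.sqrt 2 * Real.sin (k jmax * θ) else 0)) :
    TendstoUniformly (fun t θ => (Real.sqrt (-t))⁻¹ • γ θ t) L Filter.atBot := by
  set amplitude : ℝ → EuclideanSpace ℝ (Fin m) :=
    fun t => WithLp.toLp 2 fun j => (√(-t))⁻¹ * r t ^ (k j ^ 2)
  set limit : EuclideanSpace ℝ (Fin m) := WithLp.toLp 2 fun j => if j = jmax then √2 else 0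
  have hk : ∀ j ≠ jmax, k j < k jmax := fun j hj =>
    hkmono (lt_of_le_of_ne (Fin.le_def.2 (by omega)) hj)
  have hamplitude : Tendsto amplitude atBot (𝓝 limit) :=
    ((PiLp.continuous_toLp 2 _).tendsto _).comp
      (tendsto_pi_nhds.2 (tendsto_rescaled_amplitude hk hr))
  refine tendstoUniformly_of_dist_le (e := fun t => dist (amplitude t) limit)
    (tendsto_iff_dist_tendsto_zero.1 hamplitude)
    (Eventually.of_forall fun t θ => (EuclideanSpace.dist_eq_of_polar (φ := fun j => k j * θ)
      (fun j => ?_) (fun j => ?_)).le)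
  · simp [(hγ θ t j).1, (hγ θ t j).2, mul_assoc]
  · rcases hL θ j with ⟨h0, h1⟩
    rw [h0, h1]
    split_ifs with h
    · subst h; simp
    · simp

/-- Tangent flow at `-∞`: as `t → -∞`, the rescaled torus curves `θ ↦ γ(θ,t)/√(-t)`
converge uniformly in `θ` to `θ ↦ √2 (0,…,0, cos (k_m θ), sin (k_m θ))`, the
multiplicity-`k_m` parametrization of the circle of radius `√2` in the last two
coordinates (the pair of coordinates with index `jmax`). -/
theorem torus_curve_tangent_flow_at_minus_infty (m : ℕ) (hm : 1 ≤ m) (k : Fin m → ℕ)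
    (hkpos : ∀ j, 0 < k j) (hkmono : StrictMono k)
    (r : ℝ → ℝ)
    (hr : ∀ t < (0:ℝ), 0 < r t ∧ ∑ j : Fin m, (r t) ^ (2 * (k j) ^ 2) = -2 * t)
    (γ : ℝ → ℝ → EuclideanSpace ℝ (Fin m × Fin 2))
    (hγ : ∀ (θ t : ℝ) (j : Fin m),
      γ θ t (j, 0) = (r t) ^ ((k j) ^ 2) * Real.cos (k j * θ) ∧
      γ θ t (j, 1) = (r t) ^ ((k j) ^ 2) * Real.sin (k j * θ))
    (jmax : Fin m) (hjmax : (jmax : ℕ) = m - 1)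
    (L : ℝ → EuclideanSpace ℝ (Fin m × Fin 2))
    (hL : ∀ (θ : ℝ) (j : Fin m),
      (L θ (j, 0) = if j = jmax then Real.sqrt 2 * Real.cos (k jmax * θ) else 0) ∧
      (L θ (j, 1) = if j = jmax then Real.sqrt 2 * Real.sin (k jmax * θ) else 0)) :
    TendstoUniformly (fun t θ => (Real.sqrt (-t))⁻¹ • γ θ t) L Filter.atBot :=
  torus_curve_tangent_flow_at_minus_infty_general m k hkmono r hr γ hγ jmax hjmax L hL
end

section
/- As t → 0⁻, the rescaled torus curves θ ↦ γ(θ,t)/√(−t) converge uniformly in θ ∈ ℝ to the map θ ↦ √2·(cos(k₁ θ), sin(k₁ θ), 0, …, 0) ∈ ℝ^{2m}, the multiplicity-k₁ parametrization of the circle of radius √2 in the first two coordinates. In other words, the tangent flow of the torus curve at t = 0 is the multiplicity k₁ circle. -/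
/-!
Put `c_j(t) = r(t)^{k_j²} / √(-t)`, so that `γ(θ,t)/√(-t)` has the coordinates
`c_j(t) (cos k_j θ, sin k_j θ)` and `∑ c_j(t)² = 2`. Dividing numerator and denominator of
`c_j = √2 r^{k_j²} / √(∑ r^{2k_i²})` by `r^{k₁²}` exhibits `c_j` as a function of `r` continuous
at `r = 0`, with value `√2` for `j = 1` and `0` otherwise; and `r(t) → 0` as `t → 0⁻`.
Since the angular factors are bounded by `1`, the convergence is uniform in `θ`.
-/

open Filter Topology Real

theorem tendsto_nhdsGT_zero_of_pow_le {α : Type*} {l : Filter α} {f g : α → ℝ} {N : ℕ}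
    (hN : N ≠ 0) (hf : ∀ᶠ t in l, 0 < f t ∧ f t ^ N ≤ g t) (hg : Tendsto g l (𝓝 0)) :
    Tendsto f l (𝓝[>] 0) := by
  have hpow : Tendsto (fun t => f t ^ N) l (𝓝 0) :=
    tendsto_of_tendsto_of_tendsto_of_le_of_le' tendsto_const_nhds hg
      (hf.mono fun t ht => pow_nonneg ht.1.le N) (hf.mono fun t ht => ht.2)
  have hroot : Tendsto (fun t => (f t ^ N) ^ (N⁻¹ : ℝ)) l (𝓝 0) := by
    simpa [Real.zero_rpow (inv_ne_zero (Nat.cast_ne_zero.2 hN))] using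
      hpow.rpow_const (Or.inr (inv_nonneg.2 N.cast_nonneg))
  refine tendsto_nhdsWithin_iff.2 ⟨hroot.congr' ?_, hf.mono fun t ht => ht.1⟩
  filter_upwards [hf] with t ht
  exact Real.pow_rpow_inv_natCast ht.1.le hN

theorem EuclideanSpace.dist_le_sum_of_abs_sub_le {ι : Type*} [Fintype ι]
    {x y : EuclideanSpace ℝ ι} {a : ι → ℝ} (h : ∀ i, |x i - y i| ≤ a i) :
    dist x y ≤ ∑ i, a i := by
  have ha : ∀ i, 0 ≤ a i := fun i => (abs_nonneg _).trans (h i)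
  rw [EuclideanSpace.dist_eq, Real.sqrt_le_left (Finset.sum_nonneg fun i _ => ha i)]
  calc ∑ i, dist (x i) (y i) ^ 2 ≤ ∑ i, a i ^ 2 :=
        Finset.sum_le_sum fun i _ => pow_le_pow_left₀ dist_nonneg (h i) 2
    _ ≤ (∑ i, a i) ^ 2 := Finset.sum_sq_le_sq_sum_of_nonneg fun i _ => ha i

theorem EuclideanSpace.tendstoUniformly_of_coeff_mul {ι α β : Type*} [Fintype ι]
    {p : Filter α} {F : α → β → EuclideanSpace ℝ ι} {G : β → EuclideanSpace ℝ ι}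
    {c : ι → α → ℝ} {l : ι → ℝ} {v : β → ι → ℝ} {B : ℝ}
    (hF : ∀ t θ i, F t θ i = c i t * v θ i) (hG : ∀ θ i, G θ i = l i * v θ i)
    (hv : ∀ θ i, |v θ i| ≤ B) (hc : ∀ i, Tendsto (c i) p (𝓝 (l i))) :
    TendstoUniformly F G p := by
  have hsum : Tendsto (fun t => ∑ i, |l i - c i t| * B) p (𝓝 0) := by
    simpa using tendsto_finsetSum Finset.univ fun i _ =>
      (((tendsto_const_nhds (x := l i)).sub (hc i)).abs.mul_const B)
  rw [Metric.tendstoUniformly_iff]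
  intro ε hε
  filter_upwards [hsum.eventually (gt_mem_nhds hε)] with t ht θ
  refine (EuclideanSpace.dist_le_sum_of_abs_sub_le fun i => ?_).trans_lt ht
  rw [hF, hG, ← sub_mul, abs_mul]
  exact mul_le_mul_of_nonneg_left (hv θ i) (abs_nonneg _)

theorem sum_pow_two_mul_eq_sq_pow_mul_sum {ι : Type*} [Fintype ι] {n : ι → ℕ} {i₀ : ι}
    (hmin : ∀ i, n i₀ ≤ n i) (ρ : ℝ) :
    ∑ i, ρ ^ (2 * n i) = (ρ ^ n i₀) ^ 2 * ∑ i, (ρ ^ (n i - n i₀)) ^ 2 := by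
  rw [Finset.mul_sum]
  refine Finset.sum_congr rfl fun i _ => ?_
  rw [← mul_pow, ← pow_add, Nat.add_sub_cancel' (hmin i), ← pow_mul, mul_comm]

theorem tendsto_pow_div_sqrt_sum_pow {ι : Type*} [Fintype ι] [DecidableEq ι] {n : ι → ℕ}
    {i₀ : ι} (hmin : ∀ i, i ≠ i₀ → n i₀ < n i) (j : ι) :
    Tendsto (fun ρ : ℝ => ρ ^ n j / √(∑ i, ρ ^ (2 * n i))) (𝓝[>] 0)
      (𝓝 (if j = i₀ then 1 else 0)) := by
  have hle : ∀ i, n i₀ ≤ n i := fun i => by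
    rcases eq_or_ne i i₀ with rfl | hi
    exacts [le_rfl, (hmin i hi).le]
  set d : ι → ℕ := fun i => n i - n i₀
  have hd : ∀ i, d i = 0 ↔ i = i₀ := fun i => by
    simp only [d, Nat.sub_eq_zero_iff_le]
    exact ⟨fun h => by_contra fun hi => (hmin i hi).not_ge h, fun h => h ▸ le_rfl⟩
  have hsum0 : ∑ i, ((0 : ℝ) ^ d i) ^ 2 = 1 := by
    rw [Finset.sum_eq_single i₀ (fun i _ hi => by simp [zero_pow ((hd i).not.2 hi)])
      (by simp)]
    simp [(hd i₀).2 rfl]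
  have hcont : ContinuousAt (fun ρ : ℝ => ρ ^ d j / √(∑ i, (ρ ^ d i) ^ 2)) 0 := by
    refine (continuous_pow _).continuousAt.div (by fun_prop) ?_
    simp [hsum0]
  have hval : (0 : ℝ) ^ d j / √(∑ i, ((0 : ℝ) ^ d i) ^ 2) = if j = i₀ then 1 else 0 := by
    rw [hsum0, Real.sqrt_one, div_one, zero_pow_eq]
    simp [hd]
  rw [← hval]
  refine (hcont.tendsto.mono_left nhdsWithin_le_nhds).congr' ?_
  filter_upwards [self_mem_nhdsWithin] with ρ (hρ : 0 < ρ)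
  have hρn : 0 < ρ ^ n i₀ := pow_pos hρ _
  have hj : ρ ^ n j = ρ ^ n i₀ * ρ ^ d j := by rw [← pow_add, Nat.add_sub_cancel' (hle j)]
  rw [hj, sum_pow_two_mul_eq_sq_pow_mul_sum hle, Real.sqrt_mul (sq_nonneg _), Real.sqrt_sq hρn.le,
    mul_div_mul_left _ _ hρn.ne']

theorem tendsto_nhdsGT_zero_of_sum_pow_eq {ι : Type*} [Fintype ι] {N : ι → ℕ} {i₀ : ι}
    (hN : N i₀ ≠ 0) {r : ℝ → ℝ} (hr : ∀ t < (0 : ℝ), 0 < r t ∧ ∑ i, r t ^ N i = -2 * t) :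
    Tendsto r (𝓝[<] 0) (𝓝[>] 0) := by
  have hlin : Tendsto (fun t : ℝ => -2 * t) (𝓝[<] 0) (𝓝 0) := by
    simpa using ((continuous_const_mul (-2 : ℝ)).tendsto 0).mono_left nhdsWithin_le_nhds
  refine tendsto_nhdsGT_zero_of_pow_le hN ?_ hlin
  filter_upwards [self_mem_nhdsWithin] with t (ht : t < 0)
  obtain ⟨hpos, hsum⟩ := hr t ht
  refine ⟨hpos, hsum ▸ ?_⟩
  exact Finset.single_le_sum (f := fun i => r t ^ N i) (fun i _ => pow_nonneg hpos.le _)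
    (Finset.mem_univ i₀)

theorem tendsto_inv_sqrt_neg_mul_pow_of_sum_pow_eq {ι : Type*} [Fintype ι] [DecidableEq ι]
    {n : ι → ℕ} {i₀ : ι} (hn : n i₀ ≠ 0) (hmin : ∀ i, i ≠ i₀ → n i₀ < n i) {r : ℝ → ℝ}
    (hr : ∀ t < (0 : ℝ), 0 < r t ∧ ∑ i, r t ^ (2 * n i) = -2 * t) (j : ι) :
    Tendsto (fun t => (√(-t))⁻¹ * r t ^ n j) (𝓝[<] 0) (𝓝 (if j = i₀ then √2 else 0)) := by
  have hr0 := tendsto_nhdsGT_zero_of_sum_pow_eq (N := fun i => 2 * n i) (i₀ := i₀)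
    (mul_ne_zero two_ne_zero hn) hr
  have hlim := ((tendsto_pow_div_sqrt_sum_pow hmin j).comp hr0).const_mul √2
  rw [mul_ite, mul_one, mul_zero] at hlim
  refine hlim.congr' ?_
  filter_upwards [self_mem_nhdsWithin] with t (ht : t < 0)
  have hsqrt2 : 0 < √2 := by positivity
  have hsqrt : 0 < √(-t) := Real.sqrt_pos.2 (neg_pos.2 ht)
  rw [Function.comp_apply, (hr t ht).2, show -2 * t = 2 * -t by ring, Real.sqrt_mul zero_le_two]
  field_simp

theorem torus_curve_tangent_flow_at_zero_general (m : ℕ) (k : Fin m → ℕ)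
    (hkpos : ∀ j, 0 < k j) (hkmono : StrictMono k)
    (r : ℝ → ℝ)
    (hr : ∀ t < (0:ℝ), 0 < r t ∧ ∑ j : Fin m, (r t) ^ (2 * (k j) ^ 2) = -2 * t)
    (γ : ℝ → ℝ → EuclideanSpace ℝ (Fin m × Fin 2))
    (hγ : ∀ (θ t : ℝ) (j : Fin m),
      γ θ t (j, 0) = (r t) ^ ((k j) ^ 2) * Real.cos (k j * θ) ∧
      γ θ t (j, 1) = (r t) ^ ((k j) ^ 2) * Real.sin (k j * θ))
    (jmin : Fin m) (hjmin : (jmin : ℕ) = 0)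
    (L : ℝ → EuclideanSpace ℝ (Fin m × Fin 2))
    (hL : ∀ (θ : ℝ) (j : Fin m),
      (L θ (j, 0) = if j = jmin then Real.sqrt 2 * Real.cos (k jmin * θ) else 0) ∧
      (L θ (j, 1) = if j = jmin then Real.sqrt 2 * Real.sin (k jmin * θ) else 0)) :
    TendstoUniformly (fun t θ => (Real.sqrt (-t))⁻¹ • γ θ t) L
      (nhdsWithin 0 (Set.Iio 0)) := by
  have hmin : ∀ j, j ≠ jmin → k jmin ^ 2 < k j ^ 2 := fun j hj =>
    Nat.pow_lt_pow_left (hkmono ((Fin.le_def.2 (hjmin ▸ Nat.zero_le _)).lt_of_ne' hj)) two_ne_zero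
  refine EuclideanSpace.tendstoUniformly_of_coeff_mul
    (c := fun p t => (√(-t))⁻¹ * r t ^ (k p.1 ^ 2)) (l := fun p => if p.1 = jmin then √2 else 0)
    (v := fun θ p => ![cos (k p.1 * θ), sin (k p.1 * θ)] p.2) (B := 1) ?_ ?_ ?_
    fun p => tendsto_inv_sqrt_neg_mul_pow_of_sum_pow_eq (n := fun j => k j ^ 2)
      (pow_ne_zero 2 (hkpos jmin).ne') hmin hr p.1
  · rintro t θ ⟨j, i⟩
    fin_cases i <;> simp [hγ, mul_assoc]
  · rintro θ ⟨j, i⟩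
    fin_cases i <;> split_ifs <;> simp_all
  · rintro θ ⟨j, i⟩
    fin_cases i <;> simp [abs_cos_le_one, abs_sin_le_one]

/-- Tangent flow at `0`: as `t → 0⁻`, the rescaled torus curves `θ ↦ γ(θ,t)/√(-t)`
converge uniformly in `θ` to `θ ↦ √2 (cos (k₁ θ), sin (k₁ θ), 0,…,0)`, the
multiplicity-`k₁` parametrization of the circle of radius `√2` in the first two
coordinates (the pair of coordinates with index `jmin`). -/
theorem torus_curve_tangent_flow_at_zero (m : ℕ) (hm : 1 ≤ m) (k : Fin m → ℕ)
    (hkpos : ∀ j, 0 < k j) (hkmono : StrictMono k)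
    (r : ℝ → ℝ)
    (hr : ∀ t < (0:ℝ), 0 < r t ∧ ∑ j : Fin m, (r t) ^ (2 * (k j) ^ 2) = -2 * t)
    (γ : ℝ → ℝ → EuclideanSpace ℝ (Fin m × Fin 2))
    (hγ : ∀ (θ t : ℝ) (j : Fin m),
      γ θ t (j, 0) = (r t) ^ ((k j) ^ 2) * Real.cos (k j * θ) ∧
      γ θ t (j, 1) = (r t) ^ ((k j) ^ 2) * Real.sin (k j * θ))
    (jmin : Fin m) (hjmin : (jmin : ℕ) = 0)
    (L : ℝ → EuclideanSpace ℝ (Fin m × Fin 2))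
    (hL : ∀ (θ : ℝ) (j : Fin m),
      (L θ (j, 0) = if j = jmin then Real.sqrt 2 * Real.cos (k jmin * θ) else 0) ∧
      (L θ (j, 1) = if j = jmin then Real.sqrt 2 * Real.sin (k jmin * θ) else 0)) :
    TendstoUniformly (fun t θ => (Real.sqrt (-t))⁻¹ • γ θ t) L
      (nhdsWithin 0 (Set.Iio 0)) :=
  torus_curve_tangent_flow_at_zero_general m k hkpos hkmono r hr γ hγ jmin hjmin L hL
end

section
/- For every integer m ≥ 1 there exists a smooth map γ : ℝ × (−∞,0) → ℝ^{2m}, 2π-periodic in its first variable, such that: (i) for all θ ∈ ℝ and t < 0, ∂_θγ(θ,t) ≠ 0, ⟨∂_θ²γ(θ,t), ∂_θγ(θ,t)⟩ = 0, and ∂_tγ(θ,t) = ∂_θ²γ(θ,t)/|∂_θγ(θ,t)|², so γ is an ancient curve shortening flow; (ii) for every t < 0 the affine span of {γ(θ,t) : θ ∈ ℝ} is all of ℝ^{2m}, so the flow does not lie in any (2m−1)-dimensional affine subspace; and (iii) γ(θ,t)/√(−t) converges uniformly in θ, as t → 0⁻, to θ ↦ √2·(cos θ, sin θ, 0, …,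 0), so its tangent flow at 0 is the embedded (multiplicity one) circle. -/
open Real Filter Set Topology

noncomputable section

namespace CSFAux

/-- The scalar polynomial whose inverse gives the radius of the flow. -/
def F (m : ℕ) (x : ℝ) : ℝ := ∑ j : Fin m, x ^ (2 * ((j : ℕ) + 1) ^ 2) / 2

/-- Derivative of `F`. -/
def Fd (m : ℕ) (x : ℝ) : ℝ :=
  ∑ j : Fin m, (((j : ℕ) + 1 : ℝ)) ^ 2 * x ^ (2 * ((j : ℕ) + 1) ^ 2 - 1)

lemma contDiff_F (m : ℕ) : ContDiff ℝ (⊤ : ℕ∞) (F m) := by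
  apply ContDiff.sum (fun j _ => ?_)
  exact (contDiff_id.pow _).div_const 2

lemma hasDerivAt_F (m : ℕ) (x : ℝ) : HasDerivAt (F m) (Fd m x) x := by
  apply HasDerivAt.fun_sum (fun j _ => ?_)
  have h := (hasDerivAt_pow (2 * ((j : ℕ) + 1) ^ 2) x).div_const 2
  refine h.congr_deriv (Eq.symm ?_)
  rw [Nat.cast_mul]
  push_cast
  ring

lemma F_nonneg (m : ℕ) (x : ℝ) : 0 ≤ F m x := by
  apply Finset.sum_nonneg (fun j _ => ?_)
  have : x ^ (2 * ((j : ℕ) + 1) ^ 2) = (x ^ (((j : ℕ) + 1) ^ 2)) ^ 2 := by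
    rw [← pow_mul, mul_comm]
  rw [this]; positivity

lemma F_zero (m : ℕ) : F m 0 = 0 := by
  simp [F, zero_pow, Nat.mul_ne_zero, pow_ne_zero]

lemma F_strictMonoOn (m : ℕ) (hm : 1 ≤ m) : StrictMonoOn (F m) (Ici (0:ℝ)) := by
  intro a ha b hb hab
  apply Finset.sum_lt_sum
  · intro j _
    have := pow_le_pow_left₀ ha hab.le (2 * ((j : ℕ) + 1) ^ 2)
    linarith
  · refine ⟨⟨0, hm⟩, Finset.mem_univ _, ?_⟩
    have := pow_lt_pow_left₀ hab ha (n := 2 * ((0 : ℕ) + 1) ^ 2) (by norm_num)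
    simp only []
    norm_num at this ⊢
    linarith

lemma F_lower (m : ℕ) (hm : 1 ≤ m) (x : ℝ) (hx : 0 ≤ x) : x ^ 2 / 2 ≤ F m x := by
  have h := Finset.single_le_sum (f := fun j : Fin m => x ^ (2 * ((j : ℕ) + 1) ^ 2) / 2)
    (fun j _ => by
      have : x ^ (2 * ((j : ℕ) + 1) ^ 2) = (x ^ (((j : ℕ) + 1) ^ 2)) ^ 2 := by
        rw [← pow_mul, mul_comm]
      rw [this]; positivity)
    (Finset.mem_univ (⟨0, hm⟩ : Fin m))
  simpa [F] using h

lemma Fd_pos (m : ℕ) (hm : 1 ≤ m) {x : ℝ} (hx : 0 < x) : 0 < Fd m x := by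
  apply Finset.sum_pos' (fun j _ => by positivity)
  exact ⟨⟨0, hm⟩, Finset.mem_univ _, by positivity⟩

lemma exists_root (m : ℕ) (hm : 1 ≤ m) {t : ℝ} (ht : t < 0) :
    ∃ r, 0 < r ∧ F m r = -t := by
  set M := Real.sqrt (-2 * t) with hM
  have hM0 : 0 ≤ M := Real.sqrt_nonneg _
  have hFM : -t ≤ F m M := by
    have h1 : M ^ 2 = -2 * t := Real.sq_sqrt (by linarith)
    have := F_lower m hm M hM0
    rw [h1] at this; linarith
  have hcont : ContinuousOn (F m) (Icc 0 M) := (contDiff_F m).continuous.continuousOn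
  have hmem : -t ∈ Icc (F m 0) (F m M) := by
    rw [F_zero]; exact ⟨by linarith, hFM⟩
  obtain ⟨r, hr, hFr⟩ := intermediate_value_Icc hM0 hcont hmem
  refine ⟨r, ?_, hFr⟩
  rcases hr.1.lt_or_eq with h | h
  · exact h
  · exfalso; rw [← h, F_zero] at hFr; linarith

def rho (m : ℕ) (hm : 1 ≤ m) (t : ℝ) : ℝ :=
  if h : t < 0 then (exists_root m hm h).choose else 1

lemma rho_pos (m : ℕ) (hm : 1 ≤ m) {t : ℝ} (ht : t < 0) : 0 < rho m hm t := by
  rw [rho, dif_pos ht]; exact (exists_root m hm ht).choose_spec.1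

lemma F_rho (m : ℕ) (hm : 1 ≤ m) {t : ℝ} (ht : t < 0) : F m (rho m hm t) = -t := by
  rw [rho, dif_pos ht]; exact (exists_root m hm ht).choose_spec.2

lemma rho_unique (m : ℕ) (hm : 1 ≤ m) {r t : ℝ} (hr : 0 < r) (ht : t < 0)
    (hF : F m r = -t) : r = rho m hm t := by
  have := (F_strictMonoOn m hm).injOn (mem_Ici.2 hr.le)
    (mem_Ici.2 (rho_pos m hm ht).le)
  exact this (by rw [hF, F_rho m hm ht])

end CSFAux
-- appended to s1 content
namespace CSFAux

/-- speed squared of the flow -/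
def S (m : ℕ) (hm : 1 ≤ m) (t : ℝ) : ℝ :=
  ∑ j : Fin m, (((j : ℕ) + 1 : ℝ)) ^ 2 * rho m hm t ^ (2 * ((j : ℕ) + 1) ^ 2)

lemma S_eq (m : ℕ) (hm : 1 ≤ m) (t : ℝ) :
    S m hm t = rho m hm t * Fd m (rho m hm t) := by
  rw [S, Fd, Finset.mul_sum]
  apply Finset.sum_congr rfl (fun j _ => ?_)
  set r := rho m hm t
  have h1 : 2 * ((j : ℕ) + 1) ^ 2 - 1 + 1 = 2 * ((j : ℕ) + 1) ^ 2 := by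
    have : 0 < ((j : ℕ) + 1) ^ 2 := pow_pos (Nat.succ_pos _) 2
    omega
  calc (((j : ℕ) + 1 : ℝ)) ^ 2 * r ^ (2 * ((j : ℕ) + 1) ^ 2)
      = (((j : ℕ) + 1 : ℝ)) ^ 2 * (r ^ (2 * ((j : ℕ) + 1) ^ 2 - 1) * r) := by
        rw [← pow_succ, h1]
    _ = r * ((((j : ℕ) + 1 : ℝ)) ^ 2 * r ^ (2 * ((j : ℕ) + 1) ^ 2 - 1)) := by ring

lemma S_pos (m : ℕ) (hm : 1 ≤ m) {t : ℝ} (ht : t < 0) : 0 < S m hm t := by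
  rw [S_eq]
  exact mul_pos (rho_pos m hm ht) (Fd_pos m hm (rho_pos m hm ht))

theorem contDiffAt_rho (m : ℕ) (hm : 1 ≤ m) {t : ℝ} (ht : t < 0) :
    ContDiffAt ℝ (⊤ : ℕ∞) (rho m hm) t := by
  set a := rho m hm t with ha_def
  have ha : 0 < a := rho_pos m hm ht
  have hFa : F m a = -t := F_rho m hm ht
  have hc : Fd m a ≠ 0 := (Fd_pos m hm ha).ne'
  have hF : ContDiffAt ℝ (⊤ : ℕ∞) (F m) a := (contDiff_F m).contDiffAt
  set e : ℝ ≃L[ℝ] ℝ := ContinuousLinearEquiv.unitsEquivAut ℝ (Units.mk0 (Fd m a) hc) with he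
  have hf' : HasFDerivAt (F m) (e : ℝ →L[ℝ] ℝ) a := by
    have h := (hasDerivAt_F m a).hasFDerivAt
    have he2 : (e : ℝ →L[ℝ] ℝ) = ContinuousLinearMap.smulRight (1 : ℝ →L[ℝ] ℝ) (Fd m a) := by
      ext x
      simp [he, ContinuousLinearEquiv.unitsEquivAut, mul_comm]
    rw [he2]; exact h
  set g := hF.localInverse hf' (by simp) with hg_def
  have hg : ContDiffAt ℝ (⊤ : ℕ∞) g (F m a) := hF.to_localInverse hf' (by simp)
  have hstrict := hF.hasStrictFDerivAt' hf' (by simp)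
  -- eventual right inverse and positivity
  have h1 : ∀ᶠ y in 𝓝 (F m a), F m (g y) = y := hstrict.eventually_right_inverse
  have h2 : Tendsto g (𝓝 (F m a)) (𝓝 a) := by
    have hcont := hstrict.localInverse_continuousAt
    have himg := hstrict.localInverse_apply_image
    unfold ContinuousAt at hcont
    rwa [himg] at hcont
  have h3 : ∀ᶠ y in 𝓝 (F m a), 0 < g y := h2 (Ioi_mem_nhds ha)
  -- pull back along -s
  have hneg : Tendsto (fun s : ℝ => -s) (𝓝 t) (𝓝 (F m a)) := by
    rw [hFa]; exact (continuous_neg.tendsto t)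
  have h4 : ∀ᶠ s in 𝓝 t, F m (g (-s)) = -s := hneg.eventually h1
  have h5 : ∀ᶠ s in 𝓝 t, 0 < g (-s) := hneg.eventually h3
  have h6 : ∀ᶠ s in 𝓝 t, s < 0 := Filter.Tendsto.eventually_lt_const ht tendsto_id
  have heq : (fun s => rho m hm s) =ᶠ[𝓝 t] fun s => g (-s) := by
    filter_upwards [h4, h5, h6] with s hs4 hs5 hs6
    exact (rho_unique m hm hs5 hs6 hs4).symm
  have hcomp : ContDiffAt ℝ (⊤ : ℕ∞) (fun s : ℝ => g (-s)) t := by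
    have : ContDiffAt ℝ (⊤ : ℕ∞) g (-t) := by rwa [hFa] at hg
    exact this.comp t (contDiff_neg.contDiffAt)
  exact hcomp.congr_of_eventuallyEq heq

theorem hasDerivAt_rho (m : ℕ) (hm : 1 ≤ m) {t : ℝ} (ht : t < 0) :
    HasDerivAt (rho m hm) (-(rho m hm t / S m hm t)) t := by
  have hdiff : DifferentiableAt ℝ (rho m hm) t :=
    (contDiffAt_rho m hm ht).differentiableAt (by simp)
  have hd : HasDerivAt (rho m hm) (deriv (rho m hm) t) t := hdiff.hasDerivAt
  have hcomp : HasDerivAt (fun s => F m (rho m hm s))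
      (Fd m (rho m hm t) * deriv (rho m hm) t) t :=
    (hasDerivAt_F m (rho m hm t)).comp t hd
  have heq : (fun s => F m (rho m hm s)) =ᶠ[𝓝 t] fun s => -s := by
    filter_upwards [Filter.Tendsto.eventually_lt_const ht (tendsto_id (x := 𝓝 t))] with s hs
    exact F_rho m hm hs
  have hneg : HasDerivAt (fun s : ℝ => -s) (Fd m (rho m hm t) * deriv (rho m hm) t) t :=
    hcomp.congr_of_eventuallyEq heq.symm
  have huniq : Fd m (rho m hm t) * deriv (rho m hm) t = -1 :=
    hneg.unique (hasDerivAt_neg t)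
  have hFd : Fd m (rho m hm t) ≠ 0 := (Fd_pos m hm (rho_pos m hm ht)).ne'
  have hkey : deriv (rho m hm) t = -(rho m hm t / S m hm t) := by
    rw [S_eq, div_mul_cancel_left₀ (rho_pos m hm ht).ne']
    field_simp
    linear_combination huniq
  rwa [hkey] at hd

end CSFAux
namespace CSFAux

/-- `tg 0 = cos`, `tg 1 = sin`. -/
def tg (i : Fin 2) : ℝ → ℝ := if i = 0 then Real.cos else Real.sin

lemma hasDerivAt_tg (i : Fin 2) (k a x : ℝ) :
    HasDerivAt (fun x => tg i (k * x + a)) (k * tg i (k * x + (a + π / 2))) x := by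
  have hlin : HasDerivAt (fun x : ℝ => k * x + a) k x := by
    simpa using ((hasDerivAt_id x).const_mul k).add_const a
  fin_cases i
  · show HasDerivAt (fun x => Real.cos (k * x + a)) (k * Real.cos (k * x + (a + π / 2))) x
    convert hlin.cos using 1
    rw [← add_assoc, Real.cos_add_pi_div_two]; ring
  · show HasDerivAt (fun x => Real.sin (k * x + a)) (k * Real.sin (k * x + (a + π / 2))) x
    convert hlin.sin using 1
    rw [← add_assoc, Real.sin_add_pi_div_two]; ring

lemma tg_sq_add (x : ℝ) : tg 0 x ^ 2 + tg 1 x ^ 2 = 1 := by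
  show Real.cos x ^ 2 + Real.sin x ^ 2 = 1
  exact Real.cos_sq_add_sin_sq x

lemma abs_tg_le_one (i : Fin 2) (x : ℝ) : |tg i x| ≤ 1 := by
  fin_cases i
  · exact Real.abs_cos_le_one x
  · exact Real.abs_sin_le_one x

lemma tg_inner (a b : ℝ) : tg 0 a * tg 0 b + tg 1 a * tg 1 b = Real.cos (a - b) := by
  show Real.cos a * Real.cos b + Real.sin a * Real.sin b = _
  rw [Real.cos_sub]

lemma tg_add_pi (i : Fin 2) (x : ℝ) : tg i (x + π) = -tg i x := by
  fin_cases i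
  · show Real.cos (x + π) = -Real.cos x; exact Real.cos_add_pi x
  · show Real.sin (x + π) = -Real.sin x; exact Real.sin_add_pi x

lemma tg_add_nat_mul_two_pi (i : Fin 2) (x : ℝ) (n : ℕ) :
    tg i (x + n * (2 * π)) = tg i x := by
  fin_cases i
  · show Real.cos (x + n * (2 * π)) = Real.cos x
    exact_mod_cast Real.cos_add_int_mul_two_pi x n
  · show Real.sin (x + n * (2 * π)) = Real.sin x
    exact_mod_cast Real.sin_add_int_mul_two_pi x n

lemma contDiff_tg (i : Fin 2) : ContDiff ℝ (⊤ : ℕ∞) (tg i) := by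
  fin_cases i
  · show ContDiff ℝ (⊤ : ℕ∞) Real.cos; exact Real.contDiff_cos
  · show ContDiff ℝ (⊤ : ℕ∞) Real.sin; exact Real.contDiff_sin

/-- The ancient curve shortening flow (`n = 0`) together with its higher `θ`-derivatives. -/
def D (m : ℕ) (hm : 1 ≤ m) (n : ℕ) (θ t : ℝ) : EuclideanSpace ℝ (Fin m × Fin 2) :=
  WithLp.toLp 2 fun p : Fin m × Fin 2 => rho m hm t ^ (((p.1 : ℕ) + 1) ^ 2) * (((p.1 : ℕ) + 1 : ℝ)) ^ n *
    tg p.2 ((((p.1 : ℕ) + 1 : ℝ)) * θ + n * (π / 2))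

lemma hasDerivAt_pi_euclidean {ι : Type*} [Fintype ι]
    {f : ℝ → EuclideanSpace ℝ ι} {v : EuclideanSpace ℝ ι} {x : ℝ}
    (h : ∀ i, HasDerivAt (fun s => (f s i : ℝ)) (v i : ℝ) x) : HasDerivAt f v x := by
  have h2 : HasDerivAt (fun s => (PiLp.continuousLinearEquiv 2 ℝ (fun _ : ι => ℝ)) (f s))
      ((PiLp.continuousLinearEquiv 2 ℝ (fun _ : ι => ℝ)) v) x := hasDerivAt_pi.mpr h
  exact (((PiLp.continuousLinearEquiv 2 ℝ (fun _ : ι => ℝ)).symm :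
      (ι → ℝ) →L[ℝ] EuclideanSpace ℝ ι).hasFDerivAt).comp_hasDerivAt x h2

lemma hasDerivAt_D_theta (m : ℕ) (hm : 1 ≤ m) (n : ℕ) (θ t : ℝ) :
    HasDerivAt (fun θ' => D m hm n θ' t) (D m hm (n + 1) θ t) θ := by
  apply hasDerivAt_pi_euclidean
  intro p
  have h := (hasDerivAt_tg p.2 ((((p.1 : ℕ) + 1 : ℝ))) (n * (π / 2)) θ).const_mul
    (rho m hm t ^ (((p.1 : ℕ) + 1) ^ 2) * (((p.1 : ℕ) + 1 : ℝ)) ^ n)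
  refine h.congr_deriv (Eq.symm ?_)
  show rho m hm t ^ (((p.1 : ℕ) + 1) ^ 2) * (((p.1 : ℕ) + 1 : ℝ)) ^ (n + 1) *
    tg p.2 ((((p.1 : ℕ) + 1 : ℝ)) * θ + (n + 1 : ℕ) * (π / 2)) = _
  have harg : ((n + 1 : ℕ) : ℝ) * (π / 2) = (n : ℝ) * (π / 2) + π / 2 := by
    push_cast; ring
  rw [harg, pow_succ, ← add_assoc]
  ring

lemma norm_D_one_sq (m : ℕ) (hm : 1 ≤ m) (θ t : ℝ) :
    ‖D m hm 1 θ t‖ ^ 2 = S m hm t := by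
  rw [EuclideanSpace.norm_eq, Real.sq_sqrt (Finset.sum_nonneg fun p _ => by positivity)]
  rw [Fintype.sum_prod_type, S]
  apply Finset.sum_congr rfl (fun j _ => ?_)
  rw [Fin.sum_univ_two]
  set C := rho m hm t ^ (((j : ℕ) + 1) ^ 2) with hC
  set kR := (((j : ℕ) + 1 : ℝ)) with hkR
  set A := kR * θ + ((1 : ℕ) : ℝ) * (π / 2) with hA
  have h1 : D m hm 1 θ t (j, 0) = C * kR ^ (1 : ℕ) * tg 0 A := rfl
  have h2 : D m hm 1 θ t (j, 1) = C * kR ^ (1 : ℕ) * tg 1 A := rfl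
  rw [h1, h2, Real.norm_eq_abs, Real.norm_eq_abs, sq_abs, sq_abs]
  have hsq := tg_sq_add A
  have hpow : C ^ 2 = rho m hm t ^ (2 * ((j : ℕ) + 1) ^ 2) := by
    rw [hC, ← pow_mul, mul_comm]
  linear_combination (C ^ 2 * kR ^ 2) * hsq + kR ^ 2 * hpow

lemma inner_D2_D1 (m : ℕ) (hm : 1 ≤ m) (θ t : ℝ) :
    (inner ℝ (D m hm 2 θ t) (D m hm 1 θ t) : ℝ) = 0 := by
  rw [PiLp.inner_apply, Fintype.sum_prod_type]
  apply Finset.sum_eq_zero (fun j _ => ?_)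
  rw [Fin.sum_univ_two]
  set C := rho m hm t ^ (((j : ℕ) + 1) ^ 2) with hC
  set kR := (((j : ℕ) + 1 : ℝ)) with hkR
  set A0 := kR * θ + ((2 : ℕ) : ℝ) * (π / 2) with hA0
  set A1 := kR * θ + ((1 : ℕ) : ℝ) * (π / 2) with hA1
  have e2 : ∀ i : Fin 2, D m hm 2 θ t (j, i) = C * kR ^ (2 : ℕ) * tg i A0 := fun i => rfl
  have e1 : ∀ i : Fin 2, D m hm 1 θ t (j, i) = C * kR ^ (1 : ℕ) * tg i A1 := fun i => rfl
  simp only [RCLike.inner_apply, conj_trivial, e1, e2]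
  have hinner := tg_inner A0 A1
  have harg : A0 - A1 = π / 2 := by rw [hA0, hA1]; push_cast; ring
  rw [harg, Real.cos_pi_div_two] at hinner
  linear_combination (C ^ 2 * kR ^ 3) * hinner

lemma hasDerivAt_D_time (m : ℕ) (hm : 1 ≤ m) (θ : ℝ) {t : ℝ} (ht : t < 0) :
    HasDerivAt (fun s => D m hm 0 θ s) ((S m hm t)⁻¹ • D m hm 2 θ t) t := by
  apply hasDerivAt_pi_euclidean
  intro p
  set k2 := (((p.1 : ℕ) + 1) ^ 2) with hk2
  set kR := (((p.1 : ℕ) + 1 : ℝ)) with hkR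
  set A := kR * θ + ((0 : ℕ) : ℝ) * (π / 2) with hA
  have hfun : (fun s => D m hm 0 θ s p)
      = fun s => (rho m hm s ^ k2) * (kR ^ (0 : ℕ) * tg p.2 A) := by
    funext s
    show rho m hm s ^ k2 * kR ^ (0 : ℕ) * tg p.2 A = _
    ring
  rw [hfun]
  have h := ((hasDerivAt_rho m hm ht).pow k2).mul_const (kR ^ (0 : ℕ) * tg p.2 A)
  simp only [Pi.pow_apply] at h
  refine h.congr_deriv (Eq.symm ?_)
  show (S m hm t)⁻¹ * D m hm 2 θ t p = _
  have hD2 : D m hm 2 θ t p = rho m hm t ^ k2 * kR ^ (2 : ℕ) * (-tg p.2 A) := by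
    show rho m hm t ^ k2 * kR ^ (2 : ℕ) * tg p.2 (kR * θ + ((2 : ℕ) : ℝ) * (π / 2)) = _
    have harg : kR * θ + ((2 : ℕ) : ℝ) * (π / 2) = A + π := by rw [hA]; push_cast; ring
    rw [harg, tg_add_pi]
  rw [hD2]
  have hpow : rho m hm t ^ (k2 - 1) * rho m hm t = rho m hm t ^ k2 := by
    rw [← pow_succ]
    congr 1
  have hcast : ((k2 : ℕ) : ℝ) = kR ^ 2 := by rw [hk2, hkR]; push_cast; ring
  rw [hcast]
  simp only [pow_zero, one_mul]
  linear_combination (kR ^ 2 / S m hm t * tg p.2 A) * hpow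

end CSFAux
namespace CSFAux

lemma mem_of_hasDerivAt_mem {E : Type*} [NormedAddCommGroup E] [NormedSpace ℝ E]
    {V : Submodule ℝ E} (hV : IsClosed (V : Set E)) {f : ℝ → E} {v : E} {x : ℝ}
    (hf : ∀ y, f y ∈ V) (h : HasDerivAt f v x) : v ∈ V := by
  have ht := hasDerivAt_iff_tendsto_slope.mp h
  refine hV.mem_of_tendsto ht (Filter.Eventually.of_forall fun y => ?_)
  show slope f x y ∈ V
  rw [slope_def_module]
  exact V.smul_mem _ (V.sub_mem (hf _) (hf _))

lemma singles_mem_of_powers {m : ℕ} {V : Submodule ℝ (EuclideanSpace ℝ (Fin m × Fin 2))}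
    (i : Fin 2) (d x : Fin m → ℝ) (hd : ∀ j, d j ≠ 0) (hx : Function.Injective x)
    (h : ∀ s : Fin m,
      (WithLp.toLp 2 fun p : Fin m × Fin 2 => if p.2 = i then d p.1 * x p.1 ^ (s : ℕ) else 0 :
        EuclideanSpace ℝ (Fin m × Fin 2)) ∈ V)
    (j : Fin m) : EuclideanSpace.single (j, i) (1 : ℝ) ∈ V := by
  classical
  set M : Matrix (Fin m) (Fin m) ℝ := Matrix.of fun s j' => d j' * x j' ^ (s : ℕ) with hM
  have hdet : IsUnit M.det := by
    have hMeq : M = Matrix.of fun s j' => d j' * (Matrix.vandermonde x).transpose s j' := by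
      ext s j'
      simp [hM, Matrix.vandermonde, Matrix.transpose_apply]
    rw [isUnit_iff_ne_zero, hMeq, Matrix.det_mul_row, Matrix.det_transpose,
      Matrix.det_vandermonde]
    apply mul_ne_zero
    · exact Finset.prod_ne_zero_iff.mpr fun j' _ => hd j'
    · apply Finset.prod_ne_zero_iff.mpr fun a _ => ?_
      apply Finset.prod_ne_zero_iff.mpr fun b hb => ?_
      exact sub_ne_zero.mpr fun hxx => (Finset.mem_Ioi.mp hb).ne' (hx hxx)
  have hNM : M⁻¹ * M = 1 := Matrix.nonsing_inv_mul M hdet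
  have hrepr : EuclideanSpace.single (j, i) (1 : ℝ)
      = ∑ s : Fin m, (M⁻¹ j s) •
        (WithLp.toLp 2 fun p : Fin m × Fin 2 => if p.2 = i then d p.1 * x p.1 ^ (s : ℕ) else 0 :
          EuclideanSpace ℝ (Fin m × Fin 2)) := by
    ext p
    have hsum : (∑ s : Fin m, (M⁻¹ j s) •
        (WithLp.toLp 2 fun p : Fin m × Fin 2 => if p.2 = i then d p.1 * x p.1 ^ (s : ℕ) else 0 :
          EuclideanSpace ℝ (Fin m × Fin 2))) p
        = ∑ s : Fin m, (M⁻¹ j s) * (if p.2 = i then d p.1 * x p.1 ^ (s : ℕ) else 0) := by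
      rw [WithLp.ofLp_sum]
      exact Finset.sum_apply p Finset.univ _
    rw [hsum, EuclideanSpace.single_apply]
    by_cases hpi : p.2 = i
    · have hMM : ∑ s : Fin m, M⁻¹ j s * (d p.1 * x p.1 ^ (s : ℕ)) = (M⁻¹ * M) j p.1 := by
        rw [Matrix.mul_apply]
        exact Finset.sum_congr rfl fun s _ => by simp [hM]
      simp only [hpi, if_true, hMM, hNM, Matrix.one_apply]
      have : (p = (j, i)) ↔ (j = p.1) := by
        constructor
        · intro hp; rw [hp]
        · intro hp
          have : p = (p.1, p.2) := rfl
          rw [this, ← hp, hpi]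
      by_cases hj : j = p.1
      · rw [if_pos (this.mpr hj), if_pos hj]
      · rw [if_neg (fun hp => hj (this.mp hp)), if_neg hj]
    · have hne : ¬ (p = (j, i)) := fun hp => hpi (by rw [hp])
      rw [if_neg hne]
      exact (Finset.sum_eq_zero fun s _ => by rw [if_neg hpi, mul_zero]).symm
  rw [hrepr]
  exact Submodule.sum_smul_mem V _ (fun s _ => h s)

end CSFAux
namespace CSFAux

lemma D_theta_zero (m : ℕ) (hm : 1 ≤ m) (n : ℕ) (t : ℝ) (p : Fin m × Fin 2) :
    D m hm n 0 t p = rho m hm t ^ (((p.1 : ℕ) + 1) ^ 2) * (((p.1 : ℕ) + 1 : ℝ)) ^ n *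
      tg p.2 (n * (π / 2)) := by
  show _ * tg p.2 ((((p.1 : ℕ) + 1 : ℝ)) * 0 + n * (π / 2)) = _
  rw [mul_zero, zero_add]

lemma cos_nat_mul_pi_sq (n : ℕ) : Real.cos ((n : ℝ) * π) ^ 2 = 1 := by
  have h := Real.abs_cos_int_mul_pi (n : ℤ)
  push_cast at h
  rw [← sq_abs, h, one_pow]

set_option maxHeartbeats 1000000 in
theorem affineSpan_D_top (m : ℕ) (hm : 1 ≤ m) {t : ℝ} (ht : t < 0) :
    affineSpan ℝ (Set.range fun θ => D m hm 0 θ t) = ⊤ := by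
  classical
  set A := affineSpan ℝ (Set.range fun θ => D m hm 0 θ t) with hA
  have hmem : ∀ θ : ℝ, D m hm 0 θ t ∈ A := fun θ =>
    subset_affineSpan ℝ _ (Set.mem_range_self θ)
  set V := A.direction with hV
  have hVclosed : IsClosed (V : Set (EuclideanSpace ℝ (Fin m × Fin 2))) :=
    Submodule.closed_of_finiteDimensional V
  have hder : ∀ n : ℕ, ∀ θ : ℝ, D m hm (n + 1) θ t ∈ V := by
    intro n
    induction n with
    | zero =>
      intro θ
      have hf : ∀ y : ℝ, D m hm 0 y t - D m hm 0 0 t ∈ V := fun y =>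
        AffineSubspace.vsub_mem_direction (hmem y) (hmem 0)
      exact mem_of_hasDerivAt_mem hVclosed hf
        ((hasDerivAt_D_theta m hm 0 θ t).sub_const _)
    | succ n ih =>
      intro θ
      exact mem_of_hasDerivAt_mem hVclosed ih (hasDerivAt_D_theta m hm (n + 1) θ t)
  -- injectivity of the frequencies squared
  have hxinj : Function.Injective (fun j : Fin m => (((j : ℕ) + 1 : ℝ)) ^ 2) := by
    intro a b hab
    simp only [] at hab
    have h0 : (0 : ℝ) ≤ ((a : ℕ) + 1 : ℝ) := by positivity
    have h1 : (0 : ℝ) ≤ ((b : ℕ) + 1 : ℝ) := by positivity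
    have ha : ((a : ℕ) + 1 : ℝ) = ((b : ℕ) + 1 : ℝ) := by
      by_contra hne
      rcases lt_or_gt_of_ne hne with hlt | hlt
      · nlinarith
      · nlinarith
    have : ((a : ℕ) : ℝ) = ((b : ℕ) : ℝ) := by linarith
    exact Fin.ext (Nat.cast_injective this)
  -- even derivatives at θ = 0 give the cosine directions
  have heven : ∀ s : Fin m, (WithLp.toLp 2 fun p : Fin m × Fin 2 => if p.2 = 0 then
      (rho m hm t ^ (((p.1 : ℕ) + 1) ^ 2) * (((p.1 : ℕ) + 1 : ℝ)) ^ 2) *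
        ((((p.1 : ℕ) + 1 : ℝ)) ^ 2) ^ (s : ℕ) else 0 :
      EuclideanSpace ℝ (Fin m × Fin 2)) ∈ V := by
    intro s
    have hw := V.smul_mem (Real.cos ((((s : ℕ) + 1 : ℝ)) * π)) (hder (2 * (s : ℕ) + 1) 0)
    have heq : (WithLp.toLp 2 fun p : Fin m × Fin 2 => if p.2 = 0 then
        (rho m hm t ^ (((p.1 : ℕ) + 1) ^ 2) * (((p.1 : ℕ) + 1 : ℝ)) ^ 2) *
          ((((p.1 : ℕ) + 1 : ℝ)) ^ 2) ^ (s : ℕ) else 0 :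
        EuclideanSpace ℝ (Fin m × Fin 2))
        = Real.cos ((((s : ℕ) + 1 : ℝ)) * π) • D m hm (2 * (s : ℕ) + 1 + 1) 0 t := by
      ext p
      have hD := D_theta_zero m hm (2 * (s : ℕ) + 1 + 1) t p
      have hphase : ((2 * (s : ℕ) + 1 + 1 : ℕ) : ℝ) * (π / 2) = (((s : ℕ) + 1 : ℝ)) * π := by
        push_cast; ring
      show (if p.2 = 0 then _ else _)
        = Real.cos ((((s : ℕ) + 1 : ℝ)) * π) * D m hm (2 * (s : ℕ) + 1 + 1) 0 t p
      rw [hD, hphase]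
      obtain ⟨j, i⟩ := p
      have hcos2 := cos_nat_mul_pi_sq ((s : ℕ) + 1)
      push_cast at hcos2
      have hsin0 : Real.sin ((((s : ℕ) + 1 : ℝ)) * π) = 0 := by
        have := Real.sin_int_mul_pi ((s : ℕ) + 1 : ℤ)
        push_cast at this
        exact this
      have hpowk : (((j : ℕ) + 1 : ℝ)) ^ (2 * (s : ℕ) + 1 + 1)
          = (((j : ℕ) + 1 : ℝ)) ^ 2 * ((((j : ℕ) + 1 : ℝ)) ^ 2) ^ (s : ℕ) := by
        rw [← pow_mul]
        rw [← pow_add]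
        congr 1
        ring
      fin_cases i
      · show (rho m hm t ^ (((j : ℕ) + 1) ^ 2) * (((j : ℕ) + 1 : ℝ)) ^ 2) *
            ((((j : ℕ) + 1 : ℝ)) ^ 2) ^ (s : ℕ)
          = Real.cos ((((s : ℕ) + 1 : ℝ)) * π) *
            (rho m hm t ^ (((j : ℕ) + 1) ^ 2) * (((j : ℕ) + 1 : ℝ)) ^ (2 * (s : ℕ) + 1 + 1) *
              Real.cos ((((s : ℕ) + 1 : ℝ)) * π))
        rw [hpowk]
        linear_combination (-(rho m hm t ^ (((j : ℕ) + 1) ^ 2) * (((j : ℕ) + 1 : ℝ)) ^ 2 *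
          ((((j : ℕ) + 1 : ℝ)) ^ 2) ^ (s : ℕ))) * hcos2
      · show (0 : ℝ)
          = Real.cos ((((s : ℕ) + 1 : ℝ)) * π) *
            (rho m hm t ^ (((j : ℕ) + 1) ^ 2) * (((j : ℕ) + 1 : ℝ)) ^ (2 * (s : ℕ) + 1 + 1) *
              Real.sin ((((s : ℕ) + 1 : ℝ)) * π))
        rw [hsin0]; ring
    rw [heq]
    exact hw
  -- odd derivatives at θ = 0 give the sine directions
  have hodd : ∀ s : Fin m, (WithLp.toLp 2 fun p : Fin m × Fin 2 => if p.2 = 1 then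
      (rho m hm t ^ (((p.1 : ℕ) + 1) ^ 2) * (((p.1 : ℕ) + 1 : ℝ))) *
        ((((p.1 : ℕ) + 1 : ℝ)) ^ 2) ^ (s : ℕ) else 0 :
      EuclideanSpace ℝ (Fin m × Fin 2)) ∈ V := by
    intro s
    have hw := V.smul_mem (Real.cos (((s : ℕ) : ℝ) * π)) (hder (2 * (s : ℕ)) 0)
    have heq : (WithLp.toLp 2 fun p : Fin m × Fin 2 => if p.2 = 1 then
        (rho m hm t ^ (((p.1 : ℕ) + 1) ^ 2) * (((p.1 : ℕ) + 1 : ℝ))) *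
          ((((p.1 : ℕ) + 1 : ℝ)) ^ 2) ^ (s : ℕ) else 0 :
        EuclideanSpace ℝ (Fin m × Fin 2))
        = Real.cos (((s : ℕ) : ℝ) * π) • D m hm (2 * (s : ℕ) + 1) 0 t := by
      ext p
      have hD := D_theta_zero m hm (2 * (s : ℕ) + 1) t p
      have hphase : ((2 * (s : ℕ) + 1 : ℕ) : ℝ) * (π / 2)
          = ((s : ℕ) : ℝ) * π + π / 2 := by push_cast; ring
      show (if p.2 = 1 then _ else _)
        = Real.cos (((s : ℕ) : ℝ) * π) * D m hm (2 * (s : ℕ) + 1) 0 t p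
      rw [hD, hphase]
      obtain ⟨j, i⟩ := p
      have hcos2 := cos_nat_mul_pi_sq (s : ℕ)
      have hsin0 : Real.sin (((s : ℕ) : ℝ) * π) = 0 := by
        have := Real.sin_int_mul_pi ((s : ℕ) : ℤ)
        push_cast at this
        exact this
      have hpowk : (((j : ℕ) + 1 : ℝ)) ^ (2 * (s : ℕ) + 1)
          = (((j : ℕ) + 1 : ℝ)) * ((((j : ℕ) + 1 : ℝ)) ^ 2) ^ (s : ℕ) := by
        rw [← pow_mul]
        rw [pow_succ, mul_comm]
      fin_cases i
      · show (0 : ℝ)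
          = Real.cos (((s : ℕ) : ℝ) * π) *
            (rho m hm t ^ (((j : ℕ) + 1) ^ 2) * (((j : ℕ) + 1 : ℝ)) ^ (2 * (s : ℕ) + 1) *
              Real.cos (((s : ℕ) : ℝ) * π + π / 2))
        rw [Real.cos_add_pi_div_two, hsin0]; ring
      · show (rho m hm t ^ (((j : ℕ) + 1) ^ 2) * (((j : ℕ) + 1 : ℝ))) *
            ((((j : ℕ) + 1 : ℝ)) ^ 2) ^ (s : ℕ)
          = Real.cos (((s : ℕ) : ℝ) * π) *
            (rho m hm t ^ (((j : ℕ) + 1) ^ 2) * (((j : ℕ) + 1 : ℝ)) ^ (2 * (s : ℕ) + 1) *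
              Real.sin (((s : ℕ) : ℝ) * π + π / 2))
        rw [Real.sin_add_pi_div_two, hpowk]
        linear_combination (-(rho m hm t ^ (((j : ℕ) + 1) ^ 2) * (((j : ℕ) + 1 : ℝ)) *
          ((((j : ℕ) + 1 : ℝ)) ^ 2) ^ (s : ℕ))) * hcos2
    rw [heq]
    exact hw
  -- all basis vectors lie in V
  have hrpos := rho_pos m hm ht
  have hsingle0 : ∀ j : Fin m, EuclideanSpace.single (j, (0 : Fin 2)) (1 : ℝ) ∈ V :=
    singles_mem_of_powers 0
      (fun j => rho m hm t ^ (((j : ℕ) + 1) ^ 2) * (((j : ℕ) + 1 : ℝ)) ^ 2)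
      (fun j => (((j : ℕ) + 1 : ℝ)) ^ 2)
      (fun j => (mul_pos (pow_pos hrpos _) (pow_pos (by positivity) 2)).ne') hxinj heven
  have hsingle1 : ∀ j : Fin m, EuclideanSpace.single (j, (1 : Fin 2)) (1 : ℝ) ∈ V :=
    singles_mem_of_powers 1
      (fun j => rho m hm t ^ (((j : ℕ) + 1) ^ 2) * (((j : ℕ) + 1 : ℝ)))
      (fun j => (((j : ℕ) + 1 : ℝ)) ^ 2)
      (fun j => (mul_pos (pow_pos hrpos _) (by positivity)).ne') hxinj hodd
  have hVtop : V = ⊤ := by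
    rw [eq_top_iff, ← (EuclideanSpace.basisFun (Fin m × Fin 2) ℝ).toBasis.span_eq,
      Submodule.span_le]
    rintro v ⟨q, rfl⟩
    have hb : (EuclideanSpace.basisFun (Fin m × Fin 2) ℝ).toBasis q
        = EuclideanSpace.single q 1 := by
      rw [OrthonormalBasis.coe_toBasis, EuclideanSpace.basisFun_apply]
    show (EuclideanSpace.basisFun (Fin m × Fin 2) ℝ).toBasis q ∈ V
    rw [hb]
    obtain ⟨j, i⟩ := q
    fin_cases i
    · exact hsingle0 j
    · exact hsingle1 j
  have hne : (Set.range fun θ => D m hm 0 θ t).Nonempty := ⟨_, Set.mem_range_self 0⟩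
  rw [AffineSubspace.affineSpan_eq_top_iff_vectorSpan_eq_top_of_nonempty ℝ (EuclideanSpace ℝ (Fin m × Fin 2)) (EuclideanSpace ℝ (Fin m × Fin 2)) hne]
  rw [← direction_affineSpan]
  exact hVtop

end CSFAux
namespace CSFAux

/-- `F x = x^2 * P x`. -/
def Pp (m : ℕ) (x : ℝ) : ℝ := ∑ j : Fin m, x ^ (2 * ((j : ℕ) + 1) ^ 2 - 2) / 2

lemma F_eq_sq_mul_P (m : ℕ) (x : ℝ) : F m x = x ^ 2 * Pp m x := by
  rw [F, Pp, Finset.mul_sum]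
  apply Finset.sum_congr rfl (fun j _ => ?_)
  have h1 : 0 < ((j : ℕ) + 1) ^ 2 := pow_pos (Nat.succ_pos _) 2
  have h2 : 2 + (2 * ((j : ℕ) + 1) ^ 2 - 2) = 2 * ((j : ℕ) + 1) ^ 2 := by omega
  rw [mul_div_assoc', ← pow_add, h2]

lemma Pp_continuous (m : ℕ) : Continuous (Pp m) :=
  continuous_finset_sum _ (fun j _ => (continuous_pow _).div_const 2)

lemma Pp_zero (m : ℕ) (hm : 1 ≤ m) : Pp m 0 = 1 / 2 := by
  rw [Pp]
  rw [Finset.sum_eq_single_of_mem (⟨0, hm⟩ : Fin m) (Finset.mem_univ _)]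
  · norm_num
  · intro b _ hb
    have hb' : 0 < (b : ℕ) := by
      rcases Nat.eq_zero_or_pos (b : ℕ) with h | h
      · exact absurd (Fin.ext h) hb
      · exact h
    have hq : 2 ≤ ((b : ℕ) + 1) ^ 2 := by nlinarith [hb']
    have : 0 < 2 * ((b : ℕ) + 1) ^ 2 - 2 := by omega
    rw [zero_pow this.ne', zero_div]

lemma Pp_pos (m : ℕ) (hm : 1 ≤ m) (x : ℝ) (hx : 0 ≤ x) : 0 < Pp m x := by
  apply Finset.sum_pos' (fun j _ => by positivity)
  refine ⟨⟨0, hm⟩, Finset.mem_univ _, ?_⟩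
  have : 2 * (((⟨0, hm⟩ : Fin m) : ℕ) + 1) ^ 2 - 2 = 0 := by norm_num
  rw [this, pow_zero]
  norm_num

lemma sqrt_neg_t (m : ℕ) (hm : 1 ≤ m) {t : ℝ} (ht : t < 0) :
    Real.sqrt (-t) = rho m hm t * Real.sqrt (Pp m (rho m hm t)) := by
  rw [← F_rho m hm ht, F_eq_sq_mul_P, Real.sqrt_mul (sq_nonneg _),
    Real.sqrt_sq (rho_pos m hm ht).le]

lemma tendsto_rho_zero (m : ℕ) (hm : 1 ≤ m) :
    Filter.Tendsto (rho m hm) (nhdsWithin 0 (Set.Iio 0)) (nhds 0) := by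
  rw [Metric.tendsto_nhdsWithin_nhds]
  intro ε hε
  have hFε : 0 < F m ε := by
    have := F_strictMonoOn m hm (self_mem_Ici) (mem_Ici.mpr hε.le) hε
    rwa [F_zero] at this
  refine ⟨F m ε, hFε, fun {t} htmem hdist => ?_⟩
  have ht : t < 0 := htmem
  have h1 : -t < F m ε := by
    rw [Real.dist_eq, sub_zero] at hdist
    have := abs_lt.mp hdist
    linarith [this.1]
  have h2 : rho m hm t < ε := by
    by_contra hge
    push_neg at hge
    have := F_strictMonoOn m hm
    have hmono : F m ε ≤ F m (rho m hm t) := by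
      rcases hge.lt_or_eq with h | h
      · exact (F_strictMonoOn m hm (mem_Ici.mpr hε.le)
          (mem_Ici.mpr (rho_pos m hm ht).le) h).le
      · rw [h]
    rw [F_rho m hm ht] at hmono
    linarith
  rw [Real.dist_eq, sub_zero, abs_of_pos (rho_pos m hm ht)]
  exact h2

lemma norm_le_sum_abs {ι : Type*} [Fintype ι] (x : EuclideanSpace ℝ ι) :
    ‖x‖ ≤ ∑ i, |x i| := by
  rw [EuclideanSpace.norm_eq]
  have h1 : ∑ i, ‖x i‖ ^ 2 ≤ (∑ i, |x i|) ^ 2 := by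
    simp_rw [Real.norm_eq_abs]
    exact Finset.sum_sq_le_sq_sum_of_nonneg (fun i _ => abs_nonneg _)
  calc Real.sqrt (∑ i, ‖x i‖ ^ 2) ≤ Real.sqrt ((∑ i, |x i|) ^ 2) := Real.sqrt_le_sqrt h1
    _ = ∑ i, |x i| := Real.sqrt_sq (Finset.sum_nonneg fun i _ => abs_nonneg _)

/-- The circle limit. -/
def Lfun (m : ℕ) (θ : ℝ) : EuclideanSpace ℝ (Fin m × Fin 2) :=
  WithLp.toLp 2 fun p : Fin m × Fin 2 => if (p.1 : ℕ) = 0 then Real.sqrt 2 * tg p.2 θ else 0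

/-- coordinatewise bound for the renormalized flow -/
def bfun (m : ℕ) (p : Fin m × Fin 2) (r : ℝ) : ℝ :=
  if (p.1 : ℕ) = 0 then |(Real.sqrt (Pp m r))⁻¹ - Real.sqrt 2|
  else r ^ (((p.1 : ℕ) + 1) ^ 2 - 1) * (Real.sqrt (Pp m r))⁻¹

lemma bfun_zero (m : ℕ) (hm : 1 ≤ m) (p : Fin m × Fin 2) : bfun m p 0 = 0 := by
  have hsq : (Real.sqrt (Pp m 0))⁻¹ = Real.sqrt 2 := by
    rw [Pp_zero m hm, one_div, Real.sqrt_inv, inv_inv]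
  rw [bfun]
  by_cases h : (p.1 : ℕ) = 0
  · rw [if_pos h, hsq, sub_self, abs_zero]
  · rw [if_neg h]
    have h1 : 0 < (p.1 : ℕ) := Nat.pos_of_ne_zero h
    have hq : 2 ≤ ((p.1 : ℕ) + 1) ^ 2 := by nlinarith [h1]
    have h2 : 0 < ((p.1 : ℕ) + 1) ^ 2 - 1 := by omega
    rw [zero_pow h2.ne', zero_mul]

lemma bfun_continuousAt (m : ℕ) (hm : 1 ≤ m) (p : Fin m × Fin 2) :
    ContinuousAt (bfun m p) 0 := by
  have hP : ContinuousAt (fun r => (Real.sqrt (Pp m r))⁻¹) 0 := by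
    apply ContinuousAt.inv₀
    · exact (Real.continuous_sqrt.comp (Pp_continuous m)).continuousAt
    · rw [Real.sqrt_ne_zero']
      exact Pp_pos m hm 0 le_rfl
  by_cases h : (p.1 : ℕ) = 0
  · have : bfun m p = fun r => |(Real.sqrt (Pp m r))⁻¹ - Real.sqrt 2| := by
      funext r; rw [bfun, if_pos h]
    rw [this]
    exact (hP.sub continuousAt_const).abs
  · have : bfun m p = fun r => r ^ (((p.1 : ℕ) + 1) ^ 2 - 1) * (Real.sqrt (Pp m r))⁻¹ := by
      funext r; rw [bfun, if_neg h]
    rw [this]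
    exact (continuousAt_pow _ _).mul hP

theorem tendstoUniformly_D0 (m : ℕ) (hm : 1 ≤ m) :
    TendstoUniformly (fun t θ => (Real.sqrt (-t))⁻¹ • D m hm 0 θ t) (Lfun m)
      (nhdsWithin 0 (Set.Iio 0)) := by
  rw [Metric.tendstoUniformly_iff]
  intro ε hε
  -- the total bound tends to 0
  have hB : Filter.Tendsto (fun t => ∑ p : Fin m × Fin 2, bfun m p (rho m hm t))
      (nhdsWithin 0 (Set.Iio 0)) (nhds 0) := by
    have h0 : Filter.Tendsto (fun t => ∑ p : Fin m × Fin 2, bfun m p (rho m hm t))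
        (nhdsWithin 0 (Set.Iio 0)) (nhds (∑ p : Fin m × Fin 2, bfun m p 0)) := by
      apply tendsto_finset_sum
      intro p _
      exact ((bfun_continuousAt m hm p).tendsto).comp (tendsto_rho_zero m hm)
    have : (∑ p : Fin m × Fin 2, bfun m p 0) = 0 :=
      Finset.sum_eq_zero fun p _ => bfun_zero m hm p
    rwa [this] at h0
  have hBev : ∀ᶠ t in nhdsWithin 0 (Set.Iio 0),
      ∑ p : Fin m × Fin 2, bfun m p (rho m hm t) < ε := hB.eventually_lt_const hε
  filter_upwards [hBev, self_mem_nhdsWithin] with t hBt (ht : t < 0)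
  intro θ
  rw [dist_eq_norm]
  refine lt_of_le_of_lt ?_ hBt
  calc ‖Lfun m θ - (Real.sqrt (-t))⁻¹ • D m hm 0 θ t‖
      ≤ ∑ p : Fin m × Fin 2, |(Lfun m θ - (Real.sqrt (-t))⁻¹ • D m hm 0 θ t) p| :=
        norm_le_sum_abs _
    _ ≤ ∑ p : Fin m × Fin 2, bfun m p (rho m hm t) := by
        apply Finset.sum_le_sum
        intro p _
        have hrpos := rho_pos m hm ht
        have hPpos := Pp_pos m hm (rho m hm t) hrpos.le
        have hsqP : 0 < Real.sqrt (Pp m (rho m hm t)) := Real.sqrt_pos.mpr hPpos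
        have hsplit : (Real.sqrt (-t))⁻¹
            = (rho m hm t)⁻¹ * (Real.sqrt (Pp m (rho m hm t)))⁻¹ := by
          rw [sqrt_neg_t m hm ht, mul_inv]
        have happ : (Lfun m θ - (Real.sqrt (-t))⁻¹ • D m hm 0 θ t) p
            = Lfun m θ p - (Real.sqrt (-t))⁻¹ * D m hm 0 θ t p := rfl
        rw [happ]
        have hDp : D m hm 0 θ t p = rho m hm t ^ (((p.1 : ℕ) + 1) ^ 2) *
            tg p.2 ((((p.1 : ℕ) + 1 : ℝ)) * θ) := by
          show rho m hm t ^ (((p.1 : ℕ) + 1) ^ 2) * (((p.1 : ℕ) + 1 : ℝ)) ^ (0 : ℕ) *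
            tg p.2 ((((p.1 : ℕ) + 1 : ℝ)) * θ + ((0 : ℕ) : ℝ) * (π / 2)) = _
          norm_num
        rw [hDp, bfun]
        by_cases hp : (p.1 : ℕ) = 0
        · rw [if_pos hp]
          have hL : Lfun m θ p = Real.sqrt 2 * tg p.2 θ := by rw [Lfun]; exact if_pos hp
          have hk : (((p.1 : ℕ) + 1 : ℝ)) = 1 := by rw [hp]; norm_num
          have hk2 : (((p.1 : ℕ) + 1) ^ 2) = 1 := by rw [hp]; norm_num
          rw [hL, hk, hk2, pow_one, one_mul]
          have hfac : Real.sqrt 2 * tg p.2 θ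
              - (Real.sqrt (-t))⁻¹ * (rho m hm t * tg p.2 θ)
              = (Real.sqrt 2 - (Real.sqrt (Pp m (rho m hm t)))⁻¹) * tg p.2 θ := by
            rw [hsplit]
            have hr : rho m hm t ≠ 0 := hrpos.ne'
            field_simp
          rw [hfac, abs_mul, abs_sub_comm]
          calc |(Real.sqrt (Pp m (rho m hm t)))⁻¹ - Real.sqrt 2| * |tg p.2 θ|
              ≤ |(Real.sqrt (Pp m (rho m hm t)))⁻¹ - Real.sqrt 2| * 1 :=
                mul_le_mul_of_nonneg_left (abs_tg_le_one _ _) (abs_nonneg _)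
            _ = _ := mul_one _
        · rw [if_neg hp]
          have hL : Lfun m θ p = 0 := by rw [Lfun]; exact if_neg hp
          have hpow : rho m hm t ^ ((((p.1 : ℕ) + 1) ^ 2) - 1) * rho m hm t
              = rho m hm t ^ (((p.1 : ℕ) + 1) ^ 2) := by
            rw [← pow_succ]
            congr 1
          have e1 : |(Real.sqrt (-t))⁻¹ *
                (rho m hm t ^ (((p.1 : ℕ) + 1) ^ 2) * tg p.2 ((((p.1 : ℕ) + 1 : ℝ)) * θ))|
              = (Real.sqrt (-t))⁻¹ * rho m hm t ^ (((p.1 : ℕ) + 1) ^ 2) *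
                |tg p.2 ((((p.1 : ℕ) + 1 : ℝ)) * θ)| := by
            rw [abs_mul, abs_mul, abs_of_nonneg (inv_nonneg.mpr (Real.sqrt_nonneg _)),
              abs_of_pos (pow_pos hrpos _)]
            ring
          rw [hL, zero_sub, abs_neg, e1, hsplit]
          have e2 : (rho m hm t)⁻¹ * (Real.sqrt (Pp m (rho m hm t)))⁻¹ *
                rho m hm t ^ (((p.1 : ℕ) + 1) ^ 2)
              = rho m hm t ^ ((((p.1 : ℕ) + 1) ^ 2) - 1) *
                (Real.sqrt (Pp m (rho m hm t)))⁻¹ := by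
            rw [← hpow]
            have hr : rho m hm t ≠ 0 := hrpos.ne'
            field_simp
          rw [e2]
          exact mul_le_of_le_one_right
            (mul_nonneg (pow_nonneg hrpos.le _) (inv_nonneg.mpr (Real.sqrt_nonneg _)))
            (abs_tg_le_one _ _)

end CSFAux
namespace CSFAux

lemma contDiffOn_D0 (m : ℕ) (hm : 1 ≤ m) :
    ContDiffOn ℝ (⊤ : ℕ∞) (fun q : ℝ × ℝ => D m hm 0 q.1 q.2) (Set.univ ×ˢ Set.Iio 0) := by
  intro q hq
  apply ContDiffAt.contDiffWithinAt
  have hq2 : q.2 < 0 := hq.2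
  rw [contDiffAt_piLp]
  intro p
  have hcoord : (fun q : ℝ × ℝ => D m hm 0 q.1 q.2 p)
      = fun q : ℝ × ℝ => rho m hm q.2 ^ (((p.1 : ℕ) + 1) ^ 2) * (((p.1 : ℕ) + 1 : ℝ)) ^ (0 : ℕ) *
        tg p.2 ((((p.1 : ℕ) + 1 : ℝ)) * q.1 + ((0 : ℕ) : ℝ) * (π / 2)) := rfl
  rw [hcoord]
  apply ContDiffAt.mul
  · apply ContDiffAt.mul
    · exact ((contDiffAt_rho m hm hq2).comp q contDiff_snd.contDiffAt).pow _
    · exact contDiffAt_const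
  · exact ((contDiff_tg p.2).contDiffAt).comp q
      (((contDiff_const.mul contDiff_fst).add contDiff_const).contDiffAt)

lemma D0_periodic (m : ℕ) (hm : 1 ≤ m) (θ t : ℝ) :
    D m hm 0 (θ + 2 * π) t = D m hm 0 θ t := by
  ext p
  show rho m hm t ^ (((p.1 : ℕ) + 1) ^ 2) * (((p.1 : ℕ) + 1 : ℝ)) ^ (0 : ℕ) *
      tg p.2 ((((p.1 : ℕ) + 1 : ℝ)) * (θ + 2 * π) + ((0 : ℕ) : ℝ) * (π / 2))
    = rho m hm t ^ (((p.1 : ℕ) + 1) ^ 2) * (((p.1 : ℕ) + 1 : ℝ)) ^ (0 : ℕ) *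
      tg p.2 ((((p.1 : ℕ) + 1 : ℝ)) * θ + ((0 : ℕ) : ℝ) * (π / 2))
  have harg : (((p.1 : ℕ) + 1 : ℝ)) * (θ + 2 * π) + ((0 : ℕ) : ℝ) * (π / 2)
      = ((((p.1 : ℕ) + 1 : ℝ)) * θ + ((0 : ℕ) : ℝ) * (π / 2)) + ((p.1 : ℕ) + 1 : ℕ) * (2 * π) := by
    push_cast; ring
  rw [harg, tg_add_nat_mul_two_pi]

end CSFAux

open CSFAux in
/-- For every `m ≥ 1` there is a smooth ancient curve shortening flow
`γ : ℝ × (-∞,0) → ℝ^{2m}` (modeled on the Euclidean space over `Fin m × Fin 2`),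
`2π`-periodic in `θ`, such that: (i) the curve shortening flow equation holds
(with `∂_θ γ ≠ 0` and `∂_θ² γ ⟂ ∂_θ γ`); (ii) for every `t < 0` the affine span of
the curve is all of `ℝ^{2m}`; (iii) `γ(θ,t)/√(-t)` converges uniformly, as `t → 0⁻`,
to `θ ↦ √2 (cos θ, sin θ, 0, …, 0)`, the embedded multiplicity-one circle. -/
theorem exists_full_codimension_ancient_csf_with_circle_tangent_flow_at_zero
    (m : ℕ) (hm : 1 ≤ m) :
    ∃ γ : ℝ → ℝ → EuclideanSpace ℝ (Fin m × Fin 2),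
      ContDiffOn ℝ (⊤ : ℕ∞) (fun p : ℝ × ℝ => γ p.1 p.2) (Set.univ ×ˢ Set.Iio 0)
      ∧ (∀ (θ : ℝ), ∀ t < (0:ℝ), γ (θ + 2 * Real.pi) t = γ θ t)
      ∧ (∀ (θ : ℝ), ∀ t < (0:ℝ),
          deriv (fun θ' => γ θ' t) θ ≠ 0
          ∧ inner ℝ (deriv (fun θ' => deriv (fun θ'' => γ θ'' t) θ') θ)
              (deriv (fun θ' => γ θ' t) θ) = (0 : ℝ)
          ∧ deriv (fun s => γ θ s) t
              = (‖deriv (fun θ' => γ θ' t) θ‖ ^ 2)⁻¹ •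
                  deriv (fun θ' => deriv (fun θ'' => γ θ'' t) θ') θ)
      ∧ (∀ t < (0:ℝ), affineSpan ℝ (Set.range fun θ => γ θ t) = ⊤)
      ∧ ∃ L : ℝ → EuclideanSpace ℝ (Fin m × Fin 2),
          (∀ (θ : ℝ) (j : Fin m),
            (L θ (j, 0) = if (j : ℕ) = 0 then Real.sqrt 2 * Real.cos θ else 0) ∧
            (L θ (j, 1) = if (j : ℕ) = 0 then Real.sqrt 2 * Real.sin θ else 0))
          ∧ TendstoUniformly (fun t θ => (Real.sqrt (-t))⁻¹ • γ θ t) L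
              (nhdsWithin 0 (Set.Iio 0)) := by
  refine ⟨fun θ t => D m hm 0 θ t, contDiffOn_D0 m hm,
    fun θ t _ => D0_periodic m hm θ t, ?_, fun t ht => affineSpan_D_top m hm ht,
    Lfun m, fun θ j => ⟨rfl, rfl⟩, tendstoUniformly_D0 m hm⟩
  intro θ t ht
  have hd1 : ∀ θ', deriv (fun θ'' => D m hm 0 θ'' t) θ' = D m hm 1 θ' t :=
    fun θ' => (hasDerivAt_D_theta m hm 0 θ' t).deriv
  have hd1' : (fun θ' => deriv (fun θ'' => D m hm 0 θ'' t) θ') = fun θ' => D m hm 1 θ' t :=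
    funext hd1
  have hd2 : deriv (fun θ' => deriv (fun θ'' => D m hm 0 θ'' t) θ') θ = D m hm 2 θ t := by
    rw [hd1']
    exact (hasDerivAt_D_theta m hm 1 θ t).deriv
  refine ⟨?_, ?_, ?_⟩
  · rw [hd1]
    intro h0
    have hS := S_pos m hm ht
    have hn := norm_D_one_sq m hm θ t
    rw [h0, norm_zero] at hn
    nlinarith [hn, hS]
  · rw [hd2, hd1]
    exact inner_D2_D1 m hm θ t
  · rw [hd2, hd1 θ, norm_D_one_sq m hm θ t]
    exact (hasDerivAt_D_time m hm θ ht).deriv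
end
end

section
/- Let p ≥ 1 be an integer, let d₁,…,d_p ≥ 0 be reals, and let u₀, u₁, …, u_p be linearly independent vectors in a real vector space V. Suppose that for each t < 0 there is a symmetric bilinear form J_t on V that is positive definite on span(u₀,…,u_p), such that: (a) for every fixed v ∈ span(u₀,…,u_p), the function t ↦ J_t(v,v) is non-increasing on (−∞,0); and (b) there are constants C₀,…,C_p with J_t(u₀,u₀) ≤ C₀ and J_t(u_i,u_i) ≤ C_i(1−t)^{d_i} for all t < 0 and i = 1,…,p. For t₀ < 0, let w_{0,t₀} = u₀ and, for i = 1,…,p, let w_{i,t₀} be u_i minus its J_{t₀}-orthogonal projection onto span(u₀,…,u_{i−1}), and set v_{i,t₀} = w_{i,t₀}/J_{t₀}(w_{i,t₀},w_{i,t₀})^{1/2}. Then for every μ > 0 and Ω > 1 there exist infinitely many m ∈ ℕ such that, with t₀ = −Ω^{m+1}, the vectors v_{1,t₀},…,v_{p,t₀} are J_{t₀}-orthonormal and ∑_{i=1}^p J_{−Ω^m}(v_{i,t₀}, v_{i,t₀}) ≥ p · Ω^{−μ−(d₁+⋯+d_p)/p}. -/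
/-!
Suppose the bound fails for every `m ≥ M`, and let `W k` be the Gram–Schmidt family at time
`t k = -Ω ^ (M + k + 1)` witnessing the failure for `m = M + k`. Put
`G k = ∏_{i ≥ 1} J (t k) (W k i) (W k i)`, the Gram determinant of `u` at `t k` divided by
`J (t k) (u 0) (u 0)`. By AM–GM, failure at `m = M + k + 1` means
`∏ J (t k) (W (k+1) i) (W (k+1) i) < Ω ^ (-p μ - D) · G (k + 1)` with `D = ∑ d i`, and since
Gram–Schmidt vectors minimise `J (t k) (w i) (w i)` among `w i ∈ u i + span {u j | j < i}`,
`G k ≤ Ω ^ (-p μ - D) · G (k + 1)`. Hence `G k` grows at least like `Ω ^ ((p μ + D) k)`,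
whereas the growth bounds and minimality against `u` itself give `G k = O(Ω ^ (D k))`.
-/

open Finset Submodule
open LinearMap (BilinForm)

theorem prod_lt_pow_card_of_sum_lt {ι : Type*} [Fintype ι] {r : ι → ℝ} (hr : ∀ i, 0 ≤ r i)
    {E : ℝ} (h : ∑ i, r i < Fintype.card ι * E) : ∏ i, r i < E ^ Fintype.card ι := by
  set n := Fintype.card ι
  have hn : 0 < n := by
    by_contra! hn0
    have : ∑ i, r i < 0 := by simpa [Nat.le_zero.1 hn0] using h
    exact this.not_ge (sum_nonneg fun i _ => hr i)
  have hnR : (0 : ℝ) < n := by exact_mod_cast hn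
  have hmean : (∏ i, r i) ^ (n⁻¹ : ℝ) < E := by
    have := Real.geom_mean_le_arith_mean univ (fun _ => 1) r (fun _ _ => zero_le_one)
      (by simpa using hn) fun i _ => hr i
    simp only [Real.rpow_one, sum_const, card_univ, nsmul_eq_mul, mul_one, one_mul] at this
    exact this.trans_lt ((div_lt_iff₀' hnR).2 h)
  calc ∏ i, r i = ((∏ i, r i) ^ (n⁻¹ : ℝ)) ^ n :=
        (Real.rpow_inv_natCast_pow (prod_nonneg fun i _ => hr i) hn.ne').symm
    _ < E ^ n := pow_lt_pow_left₀ hmean (Real.rpow_nonneg (prod_nonneg fun i _ => hr i) _) hn.ne'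

theorem prod_lt_pow_card_mul_prod {ι : Type*} [Fintype ι] {x y : ι → ℝ} (hx : ∀ i, 0 ≤ x i)
    (hy : ∀ i, 0 < y i) {E : ℝ} (h : ∑ i, x i / y i < Fintype.card ι * E) :
    ∏ i, x i < E ^ Fintype.card ι * ∏ i, y i := by
  have := prod_lt_pow_card_of_sum_lt (fun i => div_nonneg (hx i) (hy i).le) h
  rwa [prod_div_distrib, div_lt_iff₀ (prod_pos fun i _ => hy i)] at this

theorem nonpos_of_le_mul_succ_of_le_mul_pow {G : ℕ → ℝ} {a b A : ℝ} (ha : 0 ≤ a) (hb : 0 ≤ b)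
    (hab : a * b < 1) (hstep : ∀ k, G k ≤ a * G (k + 1)) (hgrowth : ∀ k, G k ≤ A * b ^ k) :
    G 0 ≤ 0 := by
  have hgeom (k : ℕ) : G 0 ≤ A * (a * b) ^ k := by
    have hiter : G 0 ≤ a ^ k * G k := by
      induction k with
      | zero => simp
      | succ k ih =>
        calc G 0 ≤ a ^ k * G k := ih
          _ ≤ a ^ k * (a * G (k + 1)) := by gcongr; exact hstep k
          _ = a ^ (k + 1) * G (k + 1) := by ring
    calc G 0 ≤ a ^ k * (A * b ^ k) := hiter.trans (by gcongr; exact hgrowth k)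
      _ = A * (a * b) ^ k := by ring
  have hlim : Filter.Tendsto (fun k : ℕ => A * (a * b) ^ k) Filter.atTop (nhds 0) := by
    simpa using (tendsto_pow_atTop_nhds_zero_of_lt_one (by positivity) hab).const_mul A
  exact ge_of_tendsto' hlim hgeom

theorem one_add_pow_rpow_le {Ω D : ℝ} (hΩ : 1 ≤ Ω) (hD : 0 ≤ D) (n k : ℕ) :
    (1 + Ω ^ (n + k)) ^ D ≤ (2 * Ω ^ n) ^ D * (Ω ^ D) ^ k := by
  have hΩ0 : 0 ≤ Ω := zero_le_one.trans hΩ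
  calc (1 + Ω ^ (n + k)) ^ D ≤ (2 * Ω ^ n * Ω ^ k) ^ D := by
        gcongr
        have := one_le_pow₀ (n := n + k) hΩ
        rw [pow_add] at this ⊢
        linarith
    _ = (2 * Ω ^ n) ^ D * (Ω ^ D) ^ k := by
        rw [Real.mul_rpow (by positivity) (by positivity), Real.rpow_pow_comm hΩ0]

theorem rpow_pow_mul_rpow_lt_one {Ω μ D : ℝ} {p : ℕ} (hΩ : 1 < Ω) (hμ : 0 < μ) (hp : p ≠ 0) :
    (Ω ^ (-μ - D / p)) ^ p * Ω ^ D < 1 := by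
  have hΩ0 : 0 < Ω := zero_lt_one.trans hΩ
  have hexp : (-μ - D / p) * p + D = -(μ * p) := by field_simp; ring
  rw [← Real.rpow_mul_natCast hΩ0.le, ← Real.rpow_add hΩ0, hexp]
  exact Real.rpow_lt_one_of_one_lt_of_neg hΩ (by simp only [neg_lt_zero]; positivity)

namespace LinearMap.BilinForm

variable {V : Type*} [AddCommGroup V] [Module ℝ V]

theorem apply_self_le_apply_add_self {B : BilinForm ℝ V} {x y : V} (hxy : B x y = 0)
    (hyx : B y x = 0) (hy : 0 ≤ B y y) : B x x ≤ B (x + y) (x + y) := by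
  simp only [map_add, LinearMap.add_apply, hxy, hyx]
  linarith

theorem apply_inv_sqrt_smul (B B' : BilinForm ℝ V) {x : V} (hx : 0 ≤ B x x) :
    B' ((√(B x x))⁻¹ • x) ((√(B x x))⁻¹ • x) = B' x x / B x x := by
  simp only [map_smul, LinearMap.smul_apply, smul_eq_mul]
  rw [← mul_assoc, ← mul_inv, Real.mul_self_sqrt hx, inv_mul_eq_div]

theorem apply_self_nonneg_of_mem {B : BilinForm ℝ V} {S : Submodule ℝ V}
    (hpos : ∀ v ∈ S, v ≠ 0 → 0 < B v v) {v : V} (hv : v ∈ S) : 0 ≤ B v v := by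
  rcases eq_or_ne v 0 with rfl | h
  · simp
  · exact (hpos v hv h).le

end LinearMap.BilinForm

open LinearMap.BilinForm

section GramSchmidt

variable {ι V : Type*} [AddCommGroup V] [Module ℝ V]

structure IsGramSchmidt [LT ι] (B : BilinForm ℝ V) (u w : ι → V) : Prop where
  sub_mem_span : ∀ i, w i - u i ∈ span ℝ (u '' {j | j < i})
  apply_eq_zero : ∀ i j, j < i → B (w i) (u j) = 0

section

variable [Preorder ι] {B : BilinForm ℝ V} {u w w' : ι → V}

theorem mem_span_range_of_sub_mem_span {i : ι} (h : w i - u i ∈ span ℝ (u '' {j | j < i})) :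
    w i ∈ span ℝ (Set.range u) := by
  rw [← sub_add_cancel (w i) (u i)]
  exact add_mem (span_mono (Set.image_subset_range _ _) h) (subset_span ⟨i, rfl⟩)

theorem mem_span_of_sub_mem_span {i k : ι} (hik : i < k)
    (h : w i - u i ∈ span ℝ (u '' {j | j < i})) : w i ∈ span ℝ (u '' {j | j < k}) := by
  rw [← sub_add_cancel (w i) (u i)]
  exact add_mem (span_mono (Set.image_mono fun j hj => lt_trans hj hik) h)
    (subset_span ⟨i, hik, rfl⟩)

theorem ne_zero_of_sub_mem_span (hu : LinearIndependent ℝ u) {i : ι}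
    (h : w i - u i ∈ span ℝ (u '' {j | j < i})) : w i ≠ 0 := by
  rintro hw
  rw [hw, zero_sub, neg_mem_iff] at h
  exact hu.notMem_span_image (s := {j | j < i}) (lt_irrefl i) h

theorem apply_self_pos_of_sub_mem_span (hu : LinearIndependent ℝ u)
    (hpos : ∀ v ∈ span ℝ (Set.range u), v ≠ 0 → 0 < B v v) {i : ι}
    (h : w i - u i ∈ span ℝ (u '' {j | j < i})) : 0 < B (w i) (w i) :=
  hpos _ (mem_span_range_of_sub_mem_span h) (ne_zero_of_sub_mem_span hu h)

namespace IsGramSchmidt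

theorem apply_eq_zero_of_mem_span (hw : IsGramSchmidt B u w) {i : ι} {x : V}
    (hx : x ∈ span ℝ (u '' {j | j < i})) : B (w i) x = 0 := by
  have hker : span ℝ (u '' {j | j < i}) ≤ LinearMap.ker (B (w i)) := span_le.2 <| by
    rintro _ ⟨j, hj, rfl⟩
    exact hw.apply_eq_zero i j hj
  exact hker hx

theorem apply_self_le_of_sub_mem_span (hw : IsGramSchmidt B u w) (hsymm : ∀ x y, B x y = B y x)
    (hpos : ∀ v ∈ span ℝ (Set.range u), v ≠ 0 → 0 < B v v)
    (hw' : ∀ i, w' i - u i ∈ span ℝ (u '' {j | j < i})) (i : ι) :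
    B (w i) (w i) ≤ B (w' i) (w' i) := by
  have hδ : w' i - w i ∈ span ℝ (u '' {j | j < i}) := by
    simpa using sub_mem (hw' i) (hw.sub_mem_span i)
  have horth : B (w i) (w' i - w i) = 0 := hw.apply_eq_zero_of_mem_span hδ
  simpa using apply_self_le_apply_add_self horth (by rw [hsymm]; exact horth)
    (apply_self_nonneg_of_mem hpos (span_mono (Set.image_subset_range _ _) hδ))

end IsGramSchmidt

end

namespace IsGramSchmidt

variable [LinearOrder ι] {B : BilinForm ℝ V} {u w : ι → V}

theorem apply_eq_zero_of_ne (hw : IsGramSchmidt B u w) (hsymm : ∀ x y, B x y = B y x)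
    {i j : ι} (hij : i ≠ j) : B (w i) (w j) = 0 := by
  rcases hij.lt_or_gt with h | h
  · rw [hsymm]
    exact hw.apply_eq_zero_of_mem_span (mem_span_of_sub_mem_span h (hw.sub_mem_span i))
  · exact hw.apply_eq_zero_of_mem_span (mem_span_of_sub_mem_span h (hw.sub_mem_span j))

theorem apply_inv_sqrt_smul_eq_ite (hw : IsGramSchmidt B u w) (hu : LinearIndependent ℝ u)
    (hsymm : ∀ x y, B x y = B y x) (hpos : ∀ v ∈ span ℝ (Set.range u), v ≠ 0 → 0 < B v v)
    (i j : ι) :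
    B ((√(B (w i) (w i)))⁻¹ • w i) ((√(B (w j) (w j)))⁻¹ • w j) = if i = j then 1 else 0 := by
  split_ifs with hij
  · subst hij
    rw [apply_inv_sqrt_smul B B (apply_self_pos_of_sub_mem_span hu hpos (hw.sub_mem_span i)).le,
      div_self (apply_self_pos_of_sub_mem_span hu hpos (hw.sub_mem_span i)).ne']
  · simp [hw.apply_eq_zero_of_ne hsymm hij]

end IsGramSchmidt

namespace IsGramSchmidt

variable {p : ℕ} {B B' : BilinForm ℝ V} {u w w' : Fin (p + 1) → V}

theorem prod_succ_lt_pow_mul_prod (hw : IsGramSchmidt B u w) (hu : LinearIndependent ℝ u)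
    (hsymm : ∀ x y, B x y = B y x) (hpos : ∀ v ∈ span ℝ (Set.range u), v ≠ 0 → 0 < B v v)
    (hpos' : ∀ v ∈ span ℝ (Set.range u), v ≠ 0 → 0 < B' v v)
    (hw' : ∀ i, w' i - u i ∈ span ℝ (u '' {j | j < i})) {E : ℝ}
    (h : ∑ i : Fin p, B (w' i.succ) (w' i.succ) / B' (w' i.succ) (w' i.succ) < p * E) :
    ∏ i : Fin p, B (w i.succ) (w i.succ) < E ^ p * ∏ i : Fin p, B' (w' i.succ) (w' i.succ) :=
  calc ∏ i : Fin p, B (w i.succ) (w i.succ) ≤ ∏ i : Fin p, B (w' i.succ) (w' i.succ) :=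
        prod_le_prod (fun i _ => (apply_self_pos_of_sub_mem_span hu hpos (hw.sub_mem_span _)).le)
          fun i _ => hw.apply_self_le_of_sub_mem_span hsymm hpos hw' _
    _ < E ^ p * ∏ i : Fin p, B' (w' i.succ) (w' i.succ) := by
        simpa using prod_lt_pow_card_mul_prod
          (fun i : Fin p => (apply_self_pos_of_sub_mem_span hu hpos (hw' i.succ)).le)
          (fun i : Fin p => apply_self_pos_of_sub_mem_span hu hpos' (hw' i.succ)) (by simpa using h)

theorem prod_succ_le_prod_mul_rpow (hw : IsGramSchmidt B u w) (hsymm : ∀ x y, B x y = B y x)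
    (hpos : ∀ v ∈ span ℝ (Set.range u), v ≠ 0 → 0 < B v v) {C : Fin (p + 1) → ℝ}
    {d : Fin p → ℝ} {x : ℝ} (hx : 0 < x)
    (hC : ∀ i : Fin p, B (u i.succ) (u i.succ) ≤ C i.succ * x ^ d i) :
    ∏ i : Fin p, B (w i.succ) (w i.succ) ≤ (∏ i : Fin p, C i.succ) * x ^ ∑ i, d i := by
  have hu' (i : Fin (p + 1)) : u i - u i ∈ span ℝ (u '' {j | j < i}) := by simp
  calc ∏ i : Fin p, B (w i.succ) (w i.succ) ≤ ∏ i : Fin p, C i.succ * x ^ d i :=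
        prod_le_prod
          (fun i _ => apply_self_nonneg_of_mem hpos (mem_span_range_of_sub_mem_span
            (hw.sub_mem_span _)))
          fun i _ => (hw.apply_self_le_of_sub_mem_span hsymm hpos hu' _).trans (hC i)
    _ = (∏ i : Fin p, C i.succ) * x ^ ∑ i, d i := by
        rw [prod_mul_distrib, Real.rpow_sum_of_pos hx]

end IsGramSchmidt

end GramSchmidt

theorem caloric_norm_lower_bound_general (V : Type*) [AddCommGroup V] [Module ℝ V]
    (p : ℕ) (d : Fin p → ℝ) (hd : ∀ i, 0 ≤ d i)
    (u : Fin (p + 1) → V) (hu : LinearIndependent ℝ u)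
    (J : ℝ → LinearMap.BilinForm ℝ V)
    (hsymm : ∀ t < (0:ℝ), ∀ v w : V, J t v w = J t w v)
    (hposdef : ∀ t < (0:ℝ), ∀ v ∈ Submodule.span ℝ (Set.range u), v ≠ 0 → 0 < J t v v)
    (C : Fin (p + 1) → ℝ)
    (hCi : ∀ t < (0:ℝ), ∀ i : Fin p,
      J t (u i.succ) (u i.succ) ≤ C i.succ * (1 - t) ^ (d i))
    (μ Ω : ℝ) (hμ : 0 < μ) (hΩ : 1 < Ω) :
    ∀ M : ℕ, ∃ mq : ℕ, M ≤ mq ∧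
      ∀ w : Fin (p + 1) → V,
        (∀ i : Fin (p + 1),
          w i - u i ∈ Submodule.span ℝ (u '' {j : Fin (p + 1) | j < i})) →
        (∀ i j : Fin (p + 1), j < i → J (-Ω ^ (mq + 1)) (w i) (u j) = 0) →
        ((∀ i j : Fin (p + 1), i ≠ 0 → j ≠ 0 →
            J (-Ω ^ (mq + 1))
              ((Real.sqrt (J (-Ω ^ (mq + 1)) (w i) (w i)))⁻¹ • w i)
              ((Real.sqrt (J (-Ω ^ (mq + 1)) (w j) (w j)))⁻¹ • w j)
              = if i = j then 1 else 0)
          ∧ (p : ℝ) * Ω ^ (-μ - (∑ i, d i) / p) ≤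
              ∑ i : Fin p,
                J (-Ω ^ mq)
                  ((Real.sqrt (J (-Ω ^ (mq + 1)) (w i.succ) (w i.succ)))⁻¹ • w i.succ)
                  ((Real.sqrt (J (-Ω ^ (mq + 1)) (w i.succ) (w i.succ)))⁻¹ • w i.succ)) := by
  intro M
  by_contra! hfail
  choose W hWsub hWorth hWlt using fun k => hfail (M + k) (Nat.le_add_right M k)
  have hΩ0 : 0 < Ω := zero_lt_one.trans hΩ
  have ht (n : ℕ) : -Ω ^ n < 0 := neg_neg_of_pos (pow_pos hΩ0 n)
  have hW (k : ℕ) : IsGramSchmidt (J (-Ω ^ (M + k + 1))) u (W k) := ⟨hWsub k, hWorth k⟩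
  have hWpos (k : ℕ) (i : Fin (p + 1)) : 0 < J (-Ω ^ (M + k + 1)) (W k i) (W k i) :=
    apply_self_pos_of_sub_mem_span hu (hposdef _ (ht _)) (hWsub k i)
  have hratio (k : ℕ) : ∑ i : Fin p, J (-Ω ^ (M + k)) (W k i.succ) (W k i.succ) /
      J (-Ω ^ (M + k + 1)) (W k i.succ) (W k i.succ) < p * Ω ^ (-μ - (∑ i, d i) / p) := by
    rw [← sum_congr rfl fun i _ => apply_inv_sqrt_smul _ (J (-Ω ^ (M + k))) (hWpos k i.succ).le]
    exact hWlt k fun i j _ _ =>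
      (hW k).apply_inv_sqrt_smul_eq_ite hu (hsymm _ (ht _)) (hposdef _ (ht _)) i j
  have hp : p ≠ 0 := by
    rintro rfl
    simpa using hratio 0
  have hstep (k : ℕ) := ((hW k).prod_succ_lt_pow_mul_prod hu (hsymm _ (ht _)) (hposdef _ (ht _))
    (hposdef _ (ht _)) (hWsub (k + 1)) (hratio (k + 1))).le
  have hgrowth (k : ℕ) : ∏ i : Fin p, J (-Ω ^ (M + k + 1)) (W k i.succ) (W k i.succ) ≤
      ((∏ i : Fin p, C i.succ) * (2 * Ω ^ (M + 1)) ^ ∑ i, d i) * (Ω ^ ∑ i, d i) ^ k := by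
    have hG := (hW k).prod_succ_le_prod_mul_rpow (hsymm _ (ht _)) (hposdef _ (ht _))
      (by positivity : 0 < 1 + Ω ^ (M + 1 + k))
      fun i => by simpa [add_right_comm] using hCi _ (ht (M + k + 1)) i
    have hC : 0 < ∏ i : Fin p, C i.succ :=
      pos_of_mul_pos_left ((prod_pos fun i _ => hWpos k i.succ).trans_le hG) (by positivity)
    rw [mul_assoc]
    exact hG.trans (by gcongr; exact one_add_pow_rpow_le hΩ.le (sum_nonneg fun i _ => hd i) _ _)
  have hG0 := nonpos_of_le_mul_succ_of_le_mul_pow (by positivity) (by positivity)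
    (rpow_pow_mul_rpow_lt_one hΩ hμ hp) hstep hgrowth
  exact hG0.not_gt (prod_pos fun i _ => hWpos 0 i.succ)

/-- Abstract lower bound for norms of caloric functions (Colding–Minicozzi Lemma 3.9).
`u 0, …, u p` are linearly independent, `J t` is a symmetric bilinear form, positive
definite on their span, with `t ↦ J t v v` non-increasing on `(-∞,0)`, and
`J t (u 0) (u 0) ≤ C 0`, `J t (u i) (u i) ≤ C i (1-t)^{d i}`.  For `t₀ = -Ω^{m+1}`,
`w i` is `u i` minus its `J t₀`-orthogonal projection onto the span of the previous
`u j` (characterized by `w i - u i ∈ span {u j : j < i}` and `J t₀ (w i) (u j) = 0`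
for `j < i`), and `v i = w i / √(J t₀ (w i) (w i))`.  Then for every `μ > 0`, `Ω > 1`
there are infinitely many `m ∈ ℕ` such that `v 1, …, v p` are `J t₀`-orthonormal and
`∑_{i=1}^p J (-Ω^m) (v i) (v i) ≥ p Ω^{-μ-(d 1+⋯+d p)/p}`. -/
theorem caloric_norm_lower_bound (V : Type*) [AddCommGroup V] [Module ℝ V]
    (p : ℕ) (hp : 1 ≤ p) (d : Fin p → ℝ) (hd : ∀ i, 0 ≤ d i)
    (u : Fin (p + 1) → V) (hu : LinearIndependent ℝ u)
    (J : ℝ → LinearMap.BilinForm ℝ V)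
    (hsymm : ∀ t < (0:ℝ), ∀ v w : V, J t v w = J t w v)
    (hposdef : ∀ t < (0:ℝ), ∀ v ∈ Submodule.span ℝ (Set.range u), v ≠ 0 → 0 < J t v v)
    (hmono : ∀ v ∈ Submodule.span ℝ (Set.range u), ∀ t₁ t₂ : ℝ, t₁ ≤ t₂ → t₂ < 0 →
      J t₂ v v ≤ J t₁ v v)
    (C : Fin (p + 1) → ℝ)
    (hC0 : ∀ t < (0:ℝ), J t (u 0) (u 0) ≤ C 0)
    (hCi : ∀ t < (0:ℝ), ∀ i : Fin p,
      J t (u i.succ) (u i.succ) ≤ C i.succ * (1 - t) ^ (d i))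
    (μ Ω : ℝ) (hμ : 0 < μ) (hΩ : 1 < Ω) :
    ∀ M : ℕ, ∃ mq : ℕ, M ≤ mq ∧
      ∀ w : Fin (p + 1) → V,
        (∀ i : Fin (p + 1),
          w i - u i ∈ Submodule.span ℝ (u '' {j : Fin (p + 1) | j < i})) →
        (∀ i j : Fin (p + 1), j < i → J (-Ω ^ (mq + 1)) (w i) (u j) = 0) →
        ((∀ i j : Fin (p + 1), i ≠ 0 → j ≠ 0 →
            J (-Ω ^ (mq + 1))
              ((Real.sqrt (J (-Ω ^ (mq + 1)) (w i) (w i)))⁻¹ • w i)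
              ((Real.sqrt (J (-Ω ^ (mq + 1)) (w j) (w j)))⁻¹ • w j)
              = if i = j then 1 else 0)
          ∧ (p : ℝ) * Ω ^ (-μ - (∑ i, d i) / p) ≤
              ∑ i : Fin p,
                J (-Ω ^ mq)
                  ((Real.sqrt (J (-Ω ^ (mq + 1)) (w i.succ) (w i.succ)))⁻¹ • w i.succ)
                  ((Real.sqrt (J (-Ω ^ (mq + 1)) (w i.succ) (w i.succ)))⁻¹ • w i.succ)) :=
  caloric_norm_lower_bound_general V p d hd u hu J hsymm hposdef C hCi μ Ω hμ hΩ
end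

section
/- Let n ≥ 1 and let u : ℝⁿ × (−∞,0) → ℝ be twice continuously differentiable and ℤⁿ-periodic in space. Then for all T₁ < T₂ < 0 and all α > 0, δ > 0: ∫_{T₁}^{T₂} ∫_{[0,1]ⁿ} ((α − δ^{−1})·u² + 2|∇u|²)·e^{−αt} dx dt ≤ ∫_{T₁}^{T₂} ∫_{[0,1]ⁿ} δ·(∂_t u − Δu)²·e^{−αt} dx dt + ∫_{[0,1]ⁿ} u(x,T₁)²·e^{−αT₁} dx. -/
/-!
With `w = e^{-αt}` and `D = ∂ₜu - Δu`, completing the square gives the pointwise identity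
`((α - δ⁻¹)u² + 2|∇u|²)w = δD²w + 2w(uΔu + |∇u|²) - ∂ₜ(u²w) - δ⁻¹(δD - u)²w`.
Since `uΔu + |∇u|² = ∑ᵢ ∂ᵢ(u ∂ᵢu)`, its integral over the unit cube vanishes by the divergence
theorem, the face contributions cancelling by periodicity. Integrating `∂ₜ(u²w)` in time leaves
the boundary terms at `T₁` and `T₂`, and the remaining terms have a sign.
-/

noncomputable def spatialPDeriv {n : ℕ} (i : Fin n) (u : (Fin n → ℝ) → ℝ → ℝ) :
    (Fin n → ℝ) → ℝ → ℝ :=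
  fun x t => deriv (fun s => u (Function.update x i s) t) (x i)

noncomputable def spatialLaplacian {n : ℕ} (u : (Fin n → ℝ) → ℝ → ℝ) :
    (Fin n → ℝ) → ℝ → ℝ :=
  fun x t => ∑ i : Fin n, spatialPDeriv i (spatialPDeriv i u) x t

noncomputable def spatialGradSq {n : ℕ} (u : (Fin n → ℝ) → ℝ → ℝ) :
    (Fin n → ℝ) → ℝ → ℝ :=
  fun x t => ∑ i : Fin n, (spatialPDeriv i u x t) ^ 2

noncomputable def timeDeriv {n : ℕ} (u : (Fin n → ℝ) → ℝ → ℝ) :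
    (Fin n → ℝ) → ℝ → ℝ :=
  fun x t => deriv (fun s => u x s) t

open MeasureTheory Set Function

theorem Fin.insertNth_add_single {m : ℕ} {α : Type*} [AddZeroClass α] (i : Fin (m + 1))
    (a c : α) (y : Fin m → α) :
    i.insertNth (a + c) y = i.insertNth a y + Pi.single (M := fun _ => α) i c := by
  ext j
  rcases eq_or_ne j i with rfl | hj
  · simp
  · obtain ⟨k, rfl⟩ := Fin.exists_succAbove_eq hj
    simp

theorem HasDerivAt.sq_mul_exp_neg_mul {f : ℝ → ℝ} {f' t : ℝ} (α : ℝ) (hf : HasDerivAt f f' t) :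
    HasDerivAt (fun s => f s ^ 2 * Real.exp (-α * s))
      ((2 * f t * f' - α * f t ^ 2) * Real.exp (-α * t)) t := by
  have hexp : HasDerivAt (fun s => Real.exp (-α * s)) (Real.exp (-α * t) * -α) t := by
    simpa using ((hasDerivAt_id t).const_mul (-α)).exp
  exact ((hf.fun_pow 2).fun_mul hexp).congr_deriv (by ring)

theorem carleman_integrand_le (α δ w u ut lap grad : ℝ) (hδ : 0 < δ) (hw : 0 ≤ w) :
    ((α - δ⁻¹) * u ^ 2 + 2 * grad) * w ≤
      δ * (ut - lap) ^ 2 * w + 2 * w * (u * lap + grad) - (2 * u * ut - α * u ^ 2) * w := by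
  have hsq : δ * (ut - lap) ^ 2 - 2 * u * (ut - lap) + δ⁻¹ * u ^ 2 =
      δ⁻¹ * (δ * (ut - lap) - u) ^ 2 := by
    field_simp
    ring
  nlinarith [mul_nonneg (mul_nonneg (inv_nonneg.2 hδ.le) (sq_nonneg (δ * (ut - lap) - u))) hw]

section SlabIntegrals

variable {E : Type*} [TopologicalSpace E] [T2Space E] [MeasurableSpace E] [OpensMeasurableSpace E]
  {μ : Measure E} [IsFiniteMeasureOnCompacts μ] [SFinite μ] {K : Set E} {a b : ℝ}

theorem integrable_uncurry_of_continuousOn {f : E → ℝ → ℝ} (hK : IsCompact K)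
    (hf : ContinuousOn (uncurry f) (K ×ˢ Icc a b)) :
    Integrable (uncurry f) ((μ.restrict K).prod (volume.restrict (Ioc a b))) := by
  rw [Measure.prod_restrict]
  exact (hf.integrableOn_compact (hK.prod isCompact_Icc)).mono_set
    (prod_mono subset_rfl Ioc_subset_Icc_self)

theorem intervalIntegrable_setIntegral_of_continuousOn {f : E → ℝ → ℝ} (hK : IsCompact K)
    (hab : a ≤ b) (hf : ContinuousOn (uncurry f) (K ×ˢ Icc a b)) :
    IntervalIntegrable (fun t => ∫ x in K, f x t ∂μ) volume a b :=
  (intervalIntegrable_iff_integrableOn_Ioc_of_le hab).2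
    (integrable_uncurry_of_continuousOn hK hf).integral_prod_right

theorem intervalIntegral_setIntegral_eq_sub_of_hasDerivAt {F f : E → ℝ → ℝ} (hK : IsCompact K)
    (hab : a ≤ b) (hF : ∀ x ∈ K, ∀ t ∈ Icc a b, HasDerivAt (F x) (f x t) t)
    (hf : ContinuousOn (uncurry f) (K ×ˢ Icc a b)) (hFa : IntegrableOn (fun x => F x a) K μ)
    (hFb : IntegrableOn (fun x => F x b) K μ) :
    ∫ t in a..b, ∫ x in K, f x t ∂μ = ∫ x in K, F x b ∂μ - ∫ x in K, F x a ∂μ := by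
  rw [intervalIntegral.integral_of_le hab,
    ← integral_integral_swap (integrable_uncurry_of_continuousOn hK hf), ← integral_sub hFb hFa]
  refine setIntegral_congr_fun hK.measurableSet fun x hx => ?_
  rw [← intervalIntegral.integral_of_le hab]
  refine intervalIntegral.integral_eq_sub_of_hasDerivAt
    (fun t ht => hF x hx t (uIcc_of_le hab ▸ ht)) ?_
  exact ContinuousOn.intervalIntegrable <| hf.comp (Continuous.prodMk_right x).continuousOn
    fun t ht => ⟨hx, uIcc_of_le hab ▸ ht⟩

end SlabIntegrals

section PartialDerivatives

variable {n : ℕ} {u v : (Fin n → ℝ) → ℝ → ℝ} {x : Fin n → ℝ} {t : ℝ}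

theorem spatialPDeriv_eq_fderiv (h : DifferentiableAt ℝ (fun y => u y t) x) (i : Fin n) :
    spatialPDeriv i u x t = fderiv ℝ (fun y => u y t) x (Pi.single i 1) :=
  (h.hasFDerivAt.comp_hasDerivAt_of_eq (x i) (hasDerivAt_update x i (x i))
    (update_eq_self i x).symm).deriv

theorem spatialPDeriv_eq_fderiv_uncurry (h : DifferentiableAt ℝ (uncurry u) (x, t)) (i : Fin n) :
    spatialPDeriv i u x t = fderiv ℝ (uncurry u) (x, t) (Pi.single i 1, 0) :=
  (h.hasFDerivAt.comp_hasDerivAt_of_eq (x i)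
    ((hasDerivAt_update x i (x i)).prodMk (hasDerivAt_const (x i) t))
    (by rw [update_eq_self])).deriv

theorem hasDerivAt_timeDeriv (h : DifferentiableAt ℝ (uncurry u) (x, t)) :
    HasDerivAt (fun s => u x s) (timeDeriv u x t) t :=
  (h.comp t ((differentiableAt_const x).prodMk differentiableAt_id)).hasDerivAt

theorem timeDeriv_eq_fderiv_uncurry (h : DifferentiableAt ℝ (uncurry u) (x, t)) :
    timeDeriv u x t = fderiv ℝ (uncurry u) (x, t) (0, 1) :=
  (h.hasFDerivAt.comp_hasDerivAt t ((hasDerivAt_const t x).prodMk (hasDerivAt_id t))).deriv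

theorem spatialPDeriv_mul (hu : DifferentiableAt ℝ (fun y => u y t) x)
    (hv : DifferentiableAt ℝ (fun y => v y t) x) (i : Fin n) :
    spatialPDeriv i (fun y s => u y s * v y s) x t =
      spatialPDeriv i u x t * v x t + u x t * spatialPDeriv i v x t := by
  have hline : ∀ {w : (Fin n → ℝ) → ℝ → ℝ}, DifferentiableAt ℝ (fun y => w y t) x →
      DifferentiableAt ℝ (fun s => w (update x i s) t) (x i) := fun h =>
    (h.hasFDerivAt.comp_hasDerivAt_of_eq (x i) (hasDerivAt_update x i (x i))
      (update_eq_self i x).symm).differentiableAt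
  simpa only [spatialPDeriv, update_eq_self] using
    ((hline hu).hasDerivAt.fun_mul (hline hv).hasDerivAt).deriv

theorem spatialPDeriv_add_eq_of_forall_add_eq {c : Fin n → ℝ} (h : ∀ y, u (y + c) t = u y t)
    (i : Fin n) : spatialPDeriv i u (x + c) t = spatialPDeriv i u x t := by
  have hupdate : ∀ s, update (x + c) i s = update x i (s - c i) + c := by
    intro s
    ext j
    rcases eq_or_ne j i with rfl | hj <;> simp [update_of_ne, *]
  simp only [spatialPDeriv, hupdate, h, Pi.add_apply]
  rw [deriv_comp_sub_const (f := fun s => u (update x i s) t), add_sub_cancel_right]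

theorem ContDiff.spatialPDeriv {k : WithTop ℕ∞} (hu : ContDiff ℝ (k + 1) fun y => u y t)
    (i : Fin n) : ContDiff ℝ k fun y => spatialPDeriv i u y t := by
  have hd : Differentiable ℝ fun y => u y t := hu.differentiable (by simp)
  simp only [spatialPDeriv_eq_fderiv (hd _)]
  exact (hu.fderiv_right le_rfl).clm_apply contDiff_const

variable {Ω : Set ((Fin n → ℝ) × ℝ)}

theorem ContDiffOn.uncurry_spatialPDeriv {k : WithTop ℕ∞} (hu : ContDiffOn ℝ (k + 1) (uncurry u) Ω)
    (hΩ : IsOpen Ω) (i : Fin n) : ContDiffOn ℝ k (uncurry (spatialPDeriv i u)) Ω :=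
  ((hu.fderiv_of_isOpen hΩ le_rfl).clm_apply contDiffOn_const).congr fun _ hq =>
    spatialPDeriv_eq_fderiv_uncurry
      ((hu.contDiffAt (hΩ.mem_nhds hq)).differentiableAt (by simp)) i

theorem ContDiffOn.continuousOn_uncurry_timeDeriv (hu : ContDiffOn ℝ 1 (uncurry u) Ω)
    (hΩ : IsOpen Ω) : ContinuousOn (uncurry (timeDeriv u)) Ω :=
  ((hu.continuousOn_fderiv_of_isOpen hΩ le_rfl).clm_apply continuousOn_const).congr fun _ hq =>
    timeDeriv_eq_fderiv_uncurry ((hu.contDiffAt (hΩ.mem_nhds hq)).differentiableAt one_ne_zero)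

theorem ContDiffOn.continuousOn_uncurry_spatialGradSq (hu : ContDiffOn ℝ 1 (uncurry u) Ω)
    (hΩ : IsOpen Ω) : ContinuousOn (uncurry (spatialGradSq u)) Ω :=
  continuousOn_finsetSum Finset.univ fun i _ =>
    ((hu.uncurry_spatialPDeriv (k := 0) hΩ i).continuousOn).pow 2

theorem ContDiffOn.continuousOn_uncurry_spatialLaplacian (hu : ContDiffOn ℝ 2 (uncurry u) Ω)
    (hΩ : IsOpen Ω) : ContinuousOn (uncurry (spatialLaplacian u)) Ω :=
  continuousOn_finsetSum Finset.univ fun i _ =>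
    ((hu.uncurry_spatialPDeriv (k := 1) hΩ i).uncurry_spatialPDeriv (k := 0) hΩ i).continuousOn

end PartialDerivatives

section Torus

variable {n : ℕ} {u : (Fin n → ℝ) → ℝ → ℝ} {t : ℝ}

theorem integral_Icc_sum_spatialPDeriv_eq_zero {g : Fin n → (Fin n → ℝ) → ℝ → ℝ}
    (hg : ∀ i, ContDiff ℝ 1 fun x => g i x t)
    (hper : ∀ i x, g i (x + Pi.single i 1) t = g i x t) :
    ∫ x in Icc (0 : Fin n → ℝ) 1, ∑ i, spatialPDeriv i (g i) x t = 0 := by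
  cases n with
  | zero => simp
  | succ m =>
    have hd : ∀ i, Differentiable ℝ fun x => g i x t := fun i =>
      (hg i).differentiable one_ne_zero
    have hcont : Continuous fun x => ∑ i, fderiv ℝ (fun y => g i y t) x (Pi.single i 1) :=
      continuous_finsetSum _ fun i _ =>
        ((hg i).continuous_fderiv one_ne_zero).clm_apply continuous_const
    simp only [spatialPDeriv_eq_fderiv (hd _ _)]
    rw [integral_divergence_of_hasFDerivAt_off_countable' 0 1 zero_le_one (fun i x => g i x t)
      (fun i x => fderiv ℝ (fun y => g i y t) x) ∅ countable_empty
      (fun i => (hg i).continuous.continuousOn) (fun x _ i => (hd i x).hasFDerivAt)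
      hcont.integrableOn_Icc]
    refine Finset.sum_eq_zero fun i _ =>
      sub_eq_zero.2 (integral_congr_ae (ae_of_all _ fun y => ?_))
    simp only [Pi.one_apply, Pi.zero_apply]
    rw [← zero_add (1 : ℝ), Fin.insertNth_add_single]
    exact hper i _

theorem integral_Icc_mul_spatialLaplacian_add_spatialGradSq_eq_zero
    (hu : ContDiff ℝ 2 fun x => u x t) (hper : ∀ i x, u (x + Pi.single i 1) t = u x t) :
    ∫ x in Icc (0 : Fin n → ℝ) 1, (u x t * spatialLaplacian u x t + spatialGradSq u x t) = 0 := by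
  have hd : Differentiable ℝ fun x => u x t := hu.differentiable two_ne_zero
  have hdu : ∀ i, ContDiff ℝ 1 fun x => spatialPDeriv i u x t := fun i => hu.spatialPDeriv i
  have hdiv : ∀ x, ∑ i, spatialPDeriv i (fun y s => u y s * spatialPDeriv i u y s) x t =
      u x t * spatialLaplacian u x t + spatialGradSq u x t := by
    intro x
    simp only [spatialPDeriv_mul (hd x) ((hdu _).differentiable one_ne_zero x), spatialLaplacian,
      spatialGradSq, Finset.mul_sum, ← Finset.sum_add_distrib]
    exact Finset.sum_congr rfl fun i _ => by ring
  simp only [← hdiv]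
  exact integral_Icc_sum_spatialPDeriv_eq_zero (fun i => (hu.of_le one_le_two).mul (hdu i))
    fun i x => by simp only [hper, spatialPDeriv_add_eq_of_forall_add_eq (hper i)]

theorem setIntegral_carleman_integrand_le (α : ℝ) {δ : ℝ} (hδ : 0 < δ)
    (hu : ContDiff ℝ 2 fun x => u x t)
    (hper : ∀ x (z : Fin n → ℤ), u (x + fun i => (z i : ℝ)) t = u x t)
    (hut : ContinuousOn (fun x => timeDeriv u x t) (Icc 0 1)) :
    ∫ x in Icc (0 : Fin n → ℝ) 1,
        ((α - δ⁻¹) * u x t ^ 2 + 2 * spatialGradSq u x t) * Real.exp (-α * t) ≤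
      (∫ x in Icc (0 : Fin n → ℝ) 1,
        δ * (timeDeriv u x t - spatialLaplacian u x t) ^ 2 * Real.exp (-α * t)) -
      ∫ x in Icc (0 : Fin n → ℝ) 1,
        (2 * u x t * timeDeriv u x t - α * u x t ^ 2) * Real.exp (-α * t) := by
  have hper₁ : ∀ i x, u (x + Pi.single i 1) t = u x t := fun i x => by
    convert hper x (Pi.single i 1) using 3
    ext j
    simp [Pi.single_apply]
  have hcu : Continuous fun x => u x t := hu.continuous
  have hgrad : Continuous fun x => spatialGradSq u x t :=
    continuous_finsetSum _ fun i _ => (hu.spatialPDeriv (k := 1) i).continuous.pow 2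
  have hlap : Continuous fun x => spatialLaplacian u x t :=
    continuous_finsetSum _ fun i _ =>
      ((hu.spatialPDeriv (k := 1) i).spatialPDeriv (k := 0) i).continuous
  set w := Real.exp (-α * t)
  calc _ ≤ ∫ x in Icc (0 : Fin n → ℝ) 1,
        (δ * (timeDeriv u x t - spatialLaplacian u x t) ^ 2 * w +
          2 * w * (u x t * spatialLaplacian u x t + spatialGradSq u x t) -
          (2 * u x t * timeDeriv u x t - α * u x t ^ 2) * w) :=
        setIntegral_mono (by fun_prop : ContinuousOn _ _).integrableOn_Icc
          (by fun_prop : ContinuousOn _ _).integrableOn_Icc fun x =>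
          carleman_integrand_le _ _ _ _ _ _ _ hδ (Real.exp_pos _).le
    _ = _ := by
      rw [integral_sub, integral_add, integral_const_mul,
        integral_Icc_mul_spatialLaplacian_add_spatialGradSq_eq_zero hu hper₁, mul_zero, add_zero]
      all_goals exact (by fun_prop : ContinuousOn _ _).integrableOn_Icc

end Torus

theorem intervalIntegral_setIntegral_sq_mul_exp_eq_sub {n : ℕ} {u : (Fin n → ℝ) → ℝ → ℝ}
    {Ω : Set ((Fin n → ℝ) × ℝ)} {K : Set (Fin n → ℝ)} {μ : Measure (Fin n → ℝ)}
    [IsFiniteMeasureOnCompacts μ] [SFinite μ] {a b : ℝ} (α : ℝ)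
    (hu : ContDiffOn ℝ 1 (uncurry u) Ω) (hΩ : IsOpen Ω) (hK : IsCompact K) (hab : a ≤ b)
    (hKΩ : K ×ˢ Icc a b ⊆ Ω) :
    ∫ t in a..b, ∫ x in K, (2 * u x t * timeDeriv u x t - α * u x t ^ 2) * Real.exp (-α * t) ∂μ =
      ∫ x in K, u x b ^ 2 * Real.exp (-α * b) ∂μ - ∫ x in K, u x a ^ 2 * Real.exp (-α * a) ∂μ := by
  have hcu := hu.continuousOn.mono hKΩ
  have hcut := (hu.continuousOn_uncurry_timeDeriv hΩ).mono hKΩ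
  have hslice : ∀ s ∈ Icc a b, IntegrableOn (fun x => u x s ^ 2 * Real.exp (-α * s)) K μ :=
    fun s hs => ContinuousOn.integrableOn_compact hK <|
      ((hcu.comp (Continuous.prodMk_left s).continuousOn fun _ hx => ⟨hx, hs⟩).pow 2).mul
        continuousOn_const
  refine intervalIntegral_setIntegral_eq_sub_of_hasDerivAt
    (F := fun x s => u x s ^ 2 * Real.exp (-α * s)) hK hab (fun x hx s hs => ?_)
    ?_ (hslice a (left_mem_Icc.2 hab)) (hslice b (right_mem_Icc.2 hab))
  · exact (hasDerivAt_timeDeriv ((hu.contDiffAt (hΩ.mem_nhds (hKΩ ⟨hx, hs⟩))).differentiableAt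
      one_ne_zero)).sq_mul_exp_neg_mul α
  · fun_prop

theorem carleman_inequality_general (n : ℕ)
    (u : (Fin n → ℝ) → ℝ → ℝ)
    (hu : ContDiffOn ℝ 2 (fun q : (Fin n → ℝ) × ℝ => u q.1 q.2)
      (Set.univ ×ˢ Set.Iio 0))
    (hper : ∀ (x : Fin n → ℝ) (t : ℝ), t < 0 → ∀ z : Fin n → ℤ,
      u (x + fun i => (z i : ℝ)) t = u x t)
    (T₁ T₂ α δ : ℝ) (hT₁₂ : T₁ < T₂) (hT₂ : T₂ < 0) (hδ : 0 < δ) :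
    (∫ t in T₁..T₂, ∫ x in Set.Icc (0 : Fin n → ℝ) 1,
        ((α - δ⁻¹) * (u x t) ^ 2 + 2 * spatialGradSq u x t) * Real.exp (-α * t))
      ≤ (∫ t in T₁..T₂, ∫ x in Set.Icc (0 : Fin n → ℝ) 1,
          δ * (timeDeriv u x t - spatialLaplacian u x t) ^ 2 * Real.exp (-α * t))
        + ∫ x in Set.Icc (0 : Fin n → ℝ) 1, (u x T₁) ^ 2 * Real.exp (-α * T₁) := by
  replace hu : ContDiffOn ℝ 2 (uncurry u) (univ ×ˢ Iio 0) := hu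
  have hΩ : IsOpen (univ ×ˢ Iio (0 : ℝ) : Set ((Fin n → ℝ) × ℝ)) := isOpen_univ.prod isOpen_Iio
  have hslab : Icc 0 1 ×ˢ Icc T₁ T₂ ⊆ (univ ×ˢ Iio 0 : Set ((Fin n → ℝ) × ℝ)) :=
    fun q hq => ⟨trivial, hq.2.2.trans_lt hT₂⟩
  have hu₁ := hu.of_le one_le_two
  have hcu := hu.continuousOn.mono hslab
  have hcut := (hu₁.continuousOn_uncurry_timeDeriv hΩ).mono hslab
  have hcgrad := (hu₁.continuousOn_uncurry_spatialGradSq hΩ).mono hslab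
  have hclap := (hu.continuousOn_uncurry_spatialLaplacian hΩ).mono hslab
  have hint : ∀ f : (Fin n → ℝ) → ℝ → ℝ, ContinuousOn (uncurry f) (Icc 0 1 ×ˢ Icc T₁ T₂) →
      IntervalIntegrable (fun t => ∫ x in Icc 0 1, f x t) volume T₁ T₂ := fun _ hf =>
    intervalIntegrable_setIntegral_of_continuousOn isCompact_Icc hT₁₂.le hf
  have hET₂ : 0 ≤ ∫ x in Icc (0 : Fin n → ℝ) 1, u x T₂ ^ 2 * Real.exp (-α * T₂) :=
    setIntegral_nonneg measurableSet_Icc fun x _ => by positivity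
  calc _ ≤ ∫ t in T₁..T₂, ((∫ x in Icc (0 : Fin n → ℝ) 1,
          δ * (timeDeriv u x t - spatialLaplacian u x t) ^ 2 * Real.exp (-α * t)) -
        ∫ x in Icc (0 : Fin n → ℝ) 1,
          (2 * u x t * timeDeriv u x t - α * u x t ^ 2) * Real.exp (-α * t)) :=
        intervalIntegral.integral_mono_on hT₁₂.le (hint _ (by fun_prop))
          ((hint _ (by fun_prop)).sub (hint _ (by fun_prop))) fun t ht =>
          have htneg : t < 0 := ht.2.trans_lt hT₂
          setIntegral_carleman_integrand_le α hδ
            (hu.comp_contDiff (contDiff_prodMk_left t) fun _ => mk_mem_prod trivial htneg)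
            (fun x => hper x t htneg) (hcut.comp (Continuous.prodMk_left t).continuousOn
              fun _ hx => ⟨hx, ht⟩)
    _ ≤ _ := by
      rw [intervalIntegral.integral_sub (hint _ (by fun_prop)) (hint _ (by fun_prop)),
        intervalIntegral_setIntegral_sq_mul_exp_eq_sub α hu₁ hΩ isCompact_Icc hT₁₂.le hslab]
      linarith

/-- Carleman-type inequality on the flat torus: for `u : ℝⁿ × (-∞,0) → ℝ` twice
continuously differentiable and `ℤⁿ`-periodic in space, for all `T₁ < T₂ < 0` and
`α, δ > 0`,
`∫_{T₁}^{T₂} ∫_{[0,1]ⁿ} ((α - δ⁻¹)u² + 2|∇u|²)e^{-αt}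
  ≤ ∫_{T₁}^{T₂} ∫_{[0,1]ⁿ} δ(∂ₜu - Δu)²e^{-αt} + ∫_{[0,1]ⁿ} u(·,T₁)²e^{-αT₁}`. -/
theorem carleman_inequality (n : ℕ) (hn : 1 ≤ n)
    (u : (Fin n → ℝ) → ℝ → ℝ)
    (hu : ContDiffOn ℝ 2 (fun q : (Fin n → ℝ) × ℝ => u q.1 q.2)
      (Set.univ ×ˢ Set.Iio 0))
    (hper : ∀ (x : Fin n → ℝ) (t : ℝ), t < 0 → ∀ z : Fin n → ℤ,
      u (x + fun i => (z i : ℝ)) t = u x t)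
    (T₁ T₂ α δ : ℝ) (hT₁₂ : T₁ < T₂) (hT₂ : T₂ < 0) (hα : 0 < α) (hδ : 0 < δ) :
    (∫ t in T₁..T₂, ∫ x in Set.Icc (0 : Fin n → ℝ) 1,
        ((α - δ⁻¹) * (u x t) ^ 2 + 2 * spatialGradSq u x t) * Real.exp (-α * t))
      ≤ (∫ t in T₁..T₂, ∫ x in Set.Icc (0 : Fin n → ℝ) 1,
          δ * (timeDeriv u x t - spatialLaplacian u x t) ^ 2 * Real.exp (-α * t))
        + ∫ x in Set.Icc (0 : Fin n → ℝ) 1, (u x T₁) ^ 2 * Real.exp (-α * T₁) :=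
  carleman_inequality_general n u hu hper T₁ T₂ α δ hT₁₂ hT₂ hδ
end
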